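/- arXiv:1610.04098 — 9 statements merged into one kernel-verified Lean document; each statement's English description precedes it below -/
import Mathlib

section
/- Topological Baumslag Lemma: let X be a Hausdorff topological space, let T be a type equipped with a decreasing sequence of subsets T₀ ⊇ T₁ ⊇ T₂ ⊇ ⋯, let k ≥ 1, let g₁, …, g_k be self-homeomorphisms of X, and for each i = 1, …, k let φᵢ : T → Homeo(X) be a map attracting to a nonempty proper compact subset Cᵢ ⊆ X. Assume Cᵢ ∩ gᵢ₊₁(Cᵢ₊₁) = ∅ for i = 1, …, k with indices taken modulo k (so in particular C_k ∩ g₁(C₁) = ∅), and assume X ≠ g₁(C₁) ∪ C_k. Then the map ψ : T → Homeo(X) defined by ψ(t) = g₁·φ₁(t)·g₂·φ₂(t)·⋯·g_k·φ_k(t) is doubly attracting to the pair (g₁(C₁), C_k). -/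
/-!
Choose open neighbourhoods `Vᵢ ⊇ Cᵢ` so small that `Vᵢ` misses `gᵢ₊₁(Vᵢ₊₁)`, `V_k ⊆ U⁻` and
`g₁(V₁) ⊆ U⁺`; this is possible because `X` is Hausdorff and the sets `Cᵢ` are compact. For `t`
deep enough every `φᵢ(t)^{±1}` maps `X ∖ Vᵢ` into `Vᵢ`, so `gᵢ φᵢ(t)` maps `X ∖ Vᵢ` into `gᵢ(Vᵢ)`,
which lies outside `Vᵢ₋₁`. Playing ping-pong along the word, `ψ(t)` maps `X ∖ V_k` into `g₁(V₁)`,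
and `ψ(t)⁻¹` maps `X ∖ g₁(V₁)` into `V_k`.
-/

/-- The group of self-homeomorphisms of a topological space, with
`(f * g) x = f (g x)`. -/
instance homeoGroup {X : Type*} [TopologicalSpace X] : Group (X ≃ₜ X) where
  mul f g := g.trans f
  one := Homeomorph.refl X
  inv := Homeomorph.symm
  mul_assoc _ _ _ := Homeomorph.ext fun _ => rfl
  one_mul _ := Homeomorph.ext fun _ => rfl
  mul_one _ := Homeomorph.ext fun _ => rfl
  inv_mul_cancel a := Homeomorph.ext fun x => a.symm_apply_apply x

/-- Given a decreasing family `Ts` of subsets of the parameter set `T`, a map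
`φ : T → Homeo(X)` is *attracting* to a nonempty proper compact set `C ⊆ X` if for each open
neighborhood `U ⊇ C` there is `M` such that `φ(t)^{±1}(X ∖ U) ⊆ U` for all `t ∈ Ts M`. -/
def Attracting {X T : Type*} [TopologicalSpace X] (Ts : ℕ → Set T)
    (φ : T → X ≃ₜ X) (C : Set X) : Prop :=
  C.Nonempty ∧ C ≠ Set.univ ∧ IsCompact C ∧
    ∀ U : Set X, IsOpen U → C ⊆ U → ∃ M : ℕ, ∀ t ∈ Ts M,
      (∀ x : X, x ∉ U → φ t x ∈ U) ∧ (∀ x : X, x ∉ U → (φ t).symm x ∈ U)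

/-- Given a decreasing family `Ts` of subsets of the parameter set `T`, a map
`ψ : T → Homeo(X)` is *doubly attracting* to a disjoint pair `(C⁺, C⁻)` of nonempty compact
sets with `C⁺ ∪ C⁻ ≠ X` if for each disjoint pair of open neighborhoods `(U⁺, U⁻)` of
`(C⁺, C⁻)` there is `M` such that for all `t ∈ Ts M` one has `ψ(t)(X ∖ U⁻) ⊆ U⁺` and
`ψ(t)⁻¹(X ∖ U⁺) ⊆ U⁻`. -/
def DoublyAttracting {X T : Type*} [TopologicalSpace X] (Ts : ℕ → Set T)
    (ψ : T → X ≃ₜ X) (Cp Cm : Set X) : Prop :=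
  Cp.Nonempty ∧ Cm.Nonempty ∧ IsCompact Cp ∧ IsCompact Cm ∧ Disjoint Cp Cm ∧
    Cp ∪ Cm ≠ Set.univ ∧
    ∀ Up Um : Set X, IsOpen Up → IsOpen Um → Disjoint Up Um → Cp ⊆ Up → Cm ⊆ Um →
      ∃ M : ℕ, ∀ t ∈ Ts M,
        (∀ x : X, x ∉ Um → ψ t x ∈ Up) ∧ (∀ x : X, x ∉ Up → (ψ t).symm x ∈ Um)

open Set

section

variable {X : Type*} [TopologicalSpace X]

theorem mapsTo_prod_ofFn_of_pingPong {n : ℕ} {f : Fin (n + 1) → X ≃ₜ X}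
    {A B : Fin (n + 1) → Set X} (hf : ∀ i, MapsTo (f i) (A i)ᶜ (B i))
    (hAB : ∀ i : Fin n, Disjoint (A i.castSucc) (B i.succ)) :
    MapsTo (List.ofFn f).prod (A (Fin.last n))ᶜ (B 0) := by
  induction n with
  | zero => simpa [List.ofFn_succ] using hf 0
  | succ n ih =>
    have htail : MapsTo (List.ofFn fun i => f i.succ).prod (A (Fin.last (n + 1)))ᶜ (B 1) :=
      ih (fun i => hf i.succ) fun i => hAB i.succ
    intro x hx
    rw [List.ofFn_succ, List.prod_cons]
    exact hf 0 ((hAB 0).notMem_of_mem_right (htail hx))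

theorem mapsTo_inv_prod_ofFn_of_pingPong {n : ℕ} {f : Fin (n + 1) → X ≃ₜ X}
    {A B : Fin (n + 1) → Set X} (hf : ∀ i, MapsTo ⇑(f i)⁻¹ (B i)ᶜ (A i))
    (hAB : ∀ i : Fin n, Disjoint (A i.castSucc) (B i.succ)) :
    MapsTo ⇑(List.ofFn f).prod⁻¹ (B 0)ᶜ (A (Fin.last n)) := by
  induction n with
  | zero => simpa [List.ofFn_succ] using hf 0
  | succ n ih =>
    have htail : MapsTo ⇑(List.ofFn fun i => f i.succ).prod⁻¹ (B 1)ᶜ (A (Fin.last (n + 1))) :=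
      ih (fun i => hf i.succ) fun i => hAB i.succ
    intro x hx
    rw [List.ofFn_succ, List.prod_cons, mul_inv_rev]
    exact htail ((hAB 0).notMem_of_mem_left (hf 0 hx))

theorem mapsTo_mul_compl_image {g h : X ≃ₜ X} {V : Set X} (hh : MapsTo h Vᶜ V) :
    MapsTo (g * h) Vᶜ (g '' V) :=
  fun _ hx => mem_image_of_mem g (hh hx)

theorem mapsTo_inv_mul_compl_image {g h : X ≃ₜ X} {V : Set X} (hh : MapsTo h.symm Vᶜ V) :
    MapsTo ⇑(g * h)⁻¹ (g '' V)ᶜ V :=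
  fun x hx => hh fun hV => hx ⟨g.symm x, hV, g.apply_symm_apply x⟩

theorem exists_isOpen_superset_disjoint_image [T2Space X] {ι : Type*} (σ : Equiv.Perm ι)
    {C W : ι → Set X} (g : ι → X ≃ₜ X) (hC : ∀ i, IsCompact (C i))
    (hdisj : ∀ i, Disjoint (C i) (g (σ i) '' C (σ i)))
    (hW : ∀ i, IsOpen (W i)) (hCW : ∀ i, C i ⊆ W i) :
    ∃ V : ι → Set X, (∀ i, IsOpen (V i)) ∧ (∀ i, C i ⊆ V i) ∧ (∀ i, V i ⊆ W i) ∧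
      ∀ i, Disjoint (V i) (g (σ i) '' V (σ i)) := by
  choose A B hA hB hCA hCB hAB using fun i =>
    SeparatedNhds.of_isCompact_isCompact (hC i) ((hC (σ i)).image (g (σ i)).continuous)
      (hdisj i)
  refine ⟨fun i => A i ∩ g i ⁻¹' B (σ.symm i) ∩ W i,
    fun i => ((hA i).inter ((hB (σ.symm i)).preimage (g i).continuous)).inter (hW i),
    fun i x hx => ⟨⟨hCA i hx, hCB (σ.symm i) ?_⟩, hCW i hx⟩, fun i => inter_subset_right,
    fun i => (hAB i).mono (fun x hx => hx.1.1) ?_⟩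
  · rw [Equiv.apply_symm_apply]
    exact mem_image_of_mem _ hx
  · rintro _ ⟨x, hx, rfl⟩
    simpa using hx.1.2

theorem exists_isOpen_pingPong_nhds [T2Space X] {n : ℕ} {g : Fin (n + 1) → X ≃ₜ X}
    {C : Fin (n + 1) → Set X} (hC : ∀ i, IsCompact (C i))
    (hdisj : ∀ i, Disjoint (C i) (g (i + 1) '' C (i + 1))) {Up Um : Set X}
    (hUp : IsOpen Up) (hUm : IsOpen Um) (hCUp : g 0 '' C 0 ⊆ Up) (hCUm : C (Fin.last n) ⊆ Um) :
    ∃ V : Fin (n + 1) → Set X, (∀ i, IsOpen (V i)) ∧ (∀ i, C i ⊆ V i) ∧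
      V (Fin.last n) ⊆ Um ∧ g 0 '' V 0 ⊆ Up ∧
      ∀ i : Fin n, Disjoint (V i.castSucc) (g i.succ '' V i.succ) := by
  set W : Fin (n + 1) → Set X := fun i =>
    (if i = Fin.last n then Um else univ) ∩ (if i = 0 then g 0 ⁻¹' Up else univ)
  have hW i : IsOpen (W i) := by
    apply IsOpen.inter <;> split_ifs
    exacts [hUm, isOpen_univ, hUp.preimage (g 0).continuous, isOpen_univ]
  have hCW i : C i ⊆ W i := fun x hx => by
    constructor <;> split_ifs with h <;> subst_vars
    exacts [hCUm hx, trivial, hCUp (mem_image_of_mem _ hx), trivial]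
  obtain ⟨V, hV, hCV, hVW, hVdisj⟩ :=
    exists_isOpen_superset_disjoint_image (Equiv.addRight 1) g hC hdisj hW hCW
  refine ⟨V, hV, hCV, fun x hx => by simpa using (hVW _ hx).1, ?_, fun i => ?_⟩
  · rintro _ ⟨x, hx, rfl⟩
    simpa using (hVW _ hx).2
  · simpa [Fin.coeSucc_eq_succ] using hVdisj i.castSucc

theorem Attracting.exists_forall_mapsTo {T ι : Type*} [Finite ι] {Ts : ℕ → Set T}
    (hTs : Antitone Ts) {φ : ι → T → X ≃ₜ X} {C V : ι → Set X}
    (hφ : ∀ i, Attracting Ts (φ i) (C i)) (hV : ∀ i, IsOpen (V i)) (hCV : ∀ i, C i ⊆ V i) :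
    ∃ M, ∀ t ∈ Ts M, ∀ i, MapsTo (φ i t) (V i)ᶜ (V i) ∧ MapsTo (φ i t).symm (V i)ᶜ (V i) := by
  choose M hM using fun i => (hφ i).2.2.2 (V i) (hV i) (hCV i)
  obtain ⟨N, hN⟩ := Finite.exists_le M
  exact ⟨N, fun t ht i => hM i t (hTs (hN i) ht)⟩

end

/-- **Topological Baumslag Lemma.** Let `X` be Hausdorff, let each `φᵢ : T → Homeo(X)` be
attracting to a nonempty proper compact set `Cᵢ`, assume `Cᵢ ∩ gᵢ₊₁(Cᵢ₊₁) = ∅` (indices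
mod `k`) and `X ≠ g₁(C₁) ∪ C_k`.  Then `ψ(t) = g₁ φ₁(t) g₂ φ₂(t) ⋯ g_k φ_k(t)` is doubly
attracting to `(g₁(C₁), C_k)`. -/
theorem topological_baumslag {X T : Type*} [TopologicalSpace X] [T2Space X]
    (Ts : ℕ → Set T) (hTs : Antitone Ts)
    (k : ℕ) [NeZero k] (hk : 1 ≤ k) (g : Fin k → X ≃ₜ X) (φ : Fin k → T → X ≃ₜ X)
    (C : Fin k → Set X)
    (hattr : ∀ i : Fin k, Attracting Ts (φ i) (C i))
    (hdisj : ∀ i : Fin k, C i ∩ (⇑(g (i + 1)) '' C (i + 1)) = ∅)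
    (hne : (⇑(g 0) '' C 0) ∪ C ⟨k - 1, by omega⟩ ≠ Set.univ) :
    DoublyAttracting Ts (fun t => (List.ofFn fun i : Fin k => g i * φ i t).prod)
      (⇑(g 0) '' C 0) (C ⟨k - 1, by omega⟩) := by
  obtain ⟨n, rfl⟩ : ∃ n, k = n + 1 := ⟨k - 1, by omega⟩
  have hlast : (⟨n + 1 - 1, by omega⟩ : Fin (n + 1)) = Fin.last n := Fin.ext (by simp)
  rw [hlast] at hne ⊢
  have hC i : IsCompact (C i) := (hattr i).2.2.1
  have hdisj' i : Disjoint (C i) (g (i + 1) '' C (i + 1)) :=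
    disjoint_iff_inter_eq_empty.2 (hdisj i)
  refine ⟨(hattr 0).1.image _, (hattr _).1, (hC 0).image (g 0).continuous, hC _,
    by simpa using (hdisj' (Fin.last n)).symm, hne, ?_⟩
  intro Up Um hUp hUm _ hCUp hCUm
  obtain ⟨V, hV, hCV, hVUm, hVUp, hVdisj⟩ :=
    exists_isOpen_pingPong_nhds hC hdisj' hUp hUm hCUp hCUm
  obtain ⟨M, hM⟩ := Attracting.exists_forall_mapsTo hTs hattr hV hCV
  refine ⟨M, fun t ht => ⟨?_, ?_⟩⟩
  · exact (mapsTo_prod_ofFn_of_pingPong (fun i => mapsTo_mul_compl_image (hM t ht i).1)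
      hVdisj).mono (compl_subset_compl.2 hVUm) hVUp
  · exact (mapsTo_inv_prod_ofFn_of_pingPong (fun i => mapsTo_inv_mul_compl_image (hM t ht i).2)
      hVdisj).mono (compl_subset_compl.2 hVUp) hVUm
end

section
/- Projective Baumslag Lemma, hyperbolic case over ℂ: let k ≥ 1, let m₁, …, m_k be nonzero integers, and let g₁, …, g_k ∈ SL(2,ℂ) be matrices all four of whose entries are nonzero (equivalently, each gᵢ moves the fixed-point set {0, ∞} of the diagonal subgroup off itself under the Möbius action). For z ∈ ℂ ∖ {0} let D(z) ∈ SL(2,ℂ) be the diagonal matrix with diagonal entries z and z⁻¹, and set f(z) = g₁·D(z)^{m₁}·g₂·D(z)^{m₂}·⋯·g_k·D(z)^{m_k}. Then: (1) for every x ∈ ℂ the set {z ∈ ℂ ∖ {0} : (tr f(z))² = x} is finite; and (2) |tr f(z)| → ∞ along the cocompact filter of ℂ ∖ {0}, i.e. for every R > 0 there exist ε > 0 and K > 0 such that |tr f(z)| > R whenever |z| ≥ K or 0 < |z| ≤ ε. -/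
noncomputable instance : TopologicalSpace (Matrix.SpecialLinearGroup (Fin 2) ℂ) :=
  inferInstanceAs (TopologicalSpace {A : Matrix (Fin 2) (Fin 2) ℂ // A.det = 1})

/-- The diagonal matrix `D(z) = diag(z, z⁻¹) ∈ SL(2,ℂ)`, for `z ∈ ℂˣ = ℂ ∖ {0}`. -/
noncomputable def diagSL (z : ℂˣ) : Matrix.SpecialLinearGroup (Fin 2) ℂ :=
  ⟨!![(z : ℂ), 0; 0, ((z⁻¹ : ℂˣ) : ℂ)], by
    rw [Matrix.det_fin_two_of]
    simp⟩

/-!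
Put `N = ∑ |mᵢ|`. Then `z ^ N • f(z)` is a matrix of polynomials in `z`, and since all entries of
every `gᵢ` are nonzero, each of its columns consists of polynomials of one exact degree, the two
column degrees being distinct with maximum `2N`: right multiplication by `gᵢ` makes both column
degrees equal to the larger one (the two summands of each entry have different degrees, so nothing
cancels), and `z ^ |mᵢ| • D(z) ^ mᵢ` then shifts them apart again. Hence `z ^ N tr f(z) = P(z)` for
a polynomial `P` of degree `2N > N`. So `(tr f)² = x` forces a root of `P² - x X ^ (2N) ≠ 0`, and
`|tr f(z)| = |P(z)| / |z| ^ N → ∞` as `z → ∞`. The case `z → 0` is the case `z → ∞` for the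
exponents `-mᵢ`, because `D(z⁻¹) ^ (-m) = D(z) ^ m`.
-/

open Polynomial Matrix
open scoped MatrixGroups

lemma coe_diagSL (z : ℂˣ) :
    ((diagSL z : SL(2, ℂ)) : Matrix (Fin 2) (Fin 2) ℂ) = diagonal ![(z : ℂ), (z : ℂ)⁻¹] := by
  ext i j
  fin_cases i <;> fin_cases j <;> simp [diagSL]

noncomputable def diagSLHom : ℂˣ →* SL(2, ℂ) where
  toFun := diagSL
  map_one' := by ext i j; fin_cases i <;> fin_cases j <;> simp [coe_diagSL]
  map_mul' x y := by ext i j; fin_cases i <;> fin_cases j <;> simp [coe_diagSL, mul_comm]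

lemma coe_diagSL_zpow (z : ℂˣ) (n : ℤ) :
    ((diagSL z ^ n : SL(2, ℂ)) : Matrix (Fin 2) (Fin 2) ℂ) =
      diagonal ![(z : ℂ) ^ n, (z : ℂ) ^ (-n)] := by
  rw [show diagSL z ^ n = diagSL (z ^ n) from (map_zpow diagSLHom z n).symm, coe_diagSL]
  simp [_root_.zpow_neg]

lemma diagSL_inv_zpow_neg (z : ℂˣ) (n : ℤ) : diagSL z⁻¹ ^ (-n) = diagSL z ^ n := by
  change diagSLHom z⁻¹ ^ (-n) = diagSLHom z ^ n
  rw [map_inv, _root_.inv_zpow', neg_neg]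

noncomputable def diagWord {k : ℕ} (m : Fin k → ℤ) (g : Fin k → SL(2, ℂ)) (z : ℂˣ) : SL(2, ℂ) :=
  (List.ofFn fun i => g i * diagSL z ^ m i).prod

lemma diagWord_neg_inv {k : ℕ} (m : Fin k → ℤ) (g : Fin k → SL(2, ℂ)) (z : ℂˣ) :
    diagWord (-m) g z⁻¹ = diagWord m g z := by
  simp only [diagWord, Pi.neg_apply, diagSL_inv_zpow_neg]

lemma Polynomial.degree_add_eq_max_of_ne {R : Type*} [Semiring R] {p q : R[X]} {a b : ℕ}
    (hp : p.degree = a) (hq : q.degree = b) (hab : a ≠ b) : (p + q).degree = max a b := by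
  rcases hab.lt_or_gt with h | h
  · rw [degree_add_eq_right_of_degree_lt (by rw [hp, hq]; exact_mod_cast h), hq, max_eq_right h.le]
  · rw [degree_add_eq_left_of_degree_lt (by rw [hp, hq]; exact_mod_cast h), hp, max_eq_left h.le]

def Matrix.HasColumnDegrees {R ι κ : Type*} [Semiring R] (M : Matrix ι κ R[X]) (d : κ → ℕ) :
    Prop :=
  ∀ i j, (M i j).degree = d j

namespace Matrix.HasColumnDegrees

variable {R ι κ : Type*} [Semiring R]

lemma map_C {M : Matrix ι κ R} (hM : ∀ i j, M i j ≠ 0) : HasColumnDegrees (M.map C) 0 :=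
  fun i j => degree_C (hM i j)

lemma mul_diagonal_X_pow [Nontrivial R] [Fintype κ] [DecidableEq κ] {M : Matrix ι κ R[X]}
    {d : κ → ℕ} (hM : HasColumnDegrees M d) (e : κ → ℕ) :
    HasColumnDegrees (M * diagonal fun j => (X : R[X]) ^ e j) (d + e) := fun i j => by
  rw [mul_diagonal, degree_mul_X_pow, hM, Pi.add_apply, Nat.cast_add]

lemma mul_map_C [NoZeroDivisors R] {M : Matrix ι (Fin 2) R[X]} {d : Fin 2 → ℕ}
    (hM : HasColumnDegrees M d) (hd : d 0 ≠ d 1) {A : Matrix (Fin 2) κ R}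
    (hA : ∀ i j, A i j ≠ 0) :
    HasColumnDegrees (M * A.map C) fun _ => max (d 0) (d 1) := fun i j => by
  rw [mul_apply, Fin.sum_univ_two]
  exact degree_add_eq_max_of_ne (by rw [map_apply, degree_mul_C (hA 0 j), hM])
    (by rw [map_apply, degree_mul_C (hA 1 j), hM]) hd

lemma degree_trace {M : Matrix (Fin 2) (Fin 2) R[X]} {d : Fin 2 → ℕ}
    (hM : HasColumnDegrees M d) (hd : d 0 ≠ d 1) : M.trace.degree = max (d 0) (d 1) := by
  rw [trace_fin_two]
  exact degree_add_eq_max_of_ne (hM 0 0) (hM 1 1) hd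

end Matrix.HasColumnDegrees

lemma pow_natAbs_mul_zpow {G : Type*} [GroupWithZero G] {z : G} (hz : z ≠ 0) (m : ℤ) :
    z ^ m.natAbs * z ^ m = z ^ (2 * m.toNat) := by
  rw [← zpow_natCast, ← zpow_add₀ hz, ← zpow_natCast]
  congr 1
  omega

/-- `X ^ |m| • D(X) ^ m = diagonal ![X ^ (|m| + m), X ^ (|m| - m)]`. -/
def diagExponents (m : ℤ) : Fin 2 → ℕ := ![2 * m.toNat, 2 * (-m).toNat]

noncomputable def polyFactor (m : ℤ) (g : SL(2, ℂ)) : Matrix (Fin 2) (Fin 2) ℂ[X] :=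
  (g : Matrix (Fin 2) (Fin 2) ℂ).map C * diagonal fun j => X ^ diagExponents m j

lemma mapMatrix_eval_polyFactor (m : ℤ) (g : SL(2, ℂ)) (z : ℂˣ) :
    (evalRingHom (z : ℂ)).mapMatrix (polyFactor m g) =
      (z : ℂ) ^ m.natAbs • ((g * diagSL z ^ m : SL(2, ℂ)) : Matrix (Fin 2) (Fin 2) ℂ) := by
  have h₀ := pow_natAbs_mul_zpow z.ne_zero m
  have h₁ := pow_natAbs_mul_zpow z.ne_zero (-m)
  rw [Int.natAbs_neg, _root_.zpow_neg] at h₁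
  rw [Matrix.SpecialLinearGroup.coe_mul, coe_diagSL_zpow, ← mul_smul_comm, ← diagonal_smul,
    polyFactor, map_mul]
  ext i j
  fin_cases j <;> simp [h₀, h₁, diagExponents, Matrix.map_map]

lemma Matrix.HasColumnDegrees.mul_polyFactor {M : Matrix (Fin 2) (Fin 2) ℂ[X]} {d : Fin 2 → ℕ}
    (hM : M.HasColumnDegrees d) (hd : d 0 ≠ d 1) (m : ℤ) {g : SL(2, ℂ)}
    (hg : ∀ a b, (g : Matrix (Fin 2) (Fin 2) ℂ) a b ≠ 0) :
    (M * polyFactor m g).HasColumnDegrees ((fun _ => max (d 0) (d 1)) + diagExponents m) := by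
  rw [polyFactor, ← Matrix.mul_assoc]
  exact (hM.mul_map_C hd hg).mul_diagonal_X_pow _

noncomputable def polyWord {k : ℕ} (m : Fin k → ℤ) (g : Fin k → SL(2, ℂ)) :
    Matrix (Fin 2) (Fin 2) ℂ[X] :=
  (List.ofFn fun i => polyFactor (m i) (g i)).prod

lemma mapMatrix_eval_polyWord {k : ℕ} (m : Fin k → ℤ) (g : Fin k → SL(2, ℂ)) (z : ℂˣ) :
    (evalRingHom (z : ℂ)).mapMatrix (polyWord m g) =
      (z : ℂ) ^ (∑ i, (m i).natAbs) • ((diagWord m g z : SL(2, ℂ)) : Matrix (Fin 2) (Fin 2) ℂ) := by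
  induction k with
  | zero => simp [polyWord, diagWord]
  | succ k ih =>
    have h := ih (fun i => m i.succ) (fun i => g i.succ)
    simp only [polyWord, diagWord] at h ⊢
    rw [List.ofFn_succ, List.ofFn_succ, List.prod_cons, List.prod_cons, map_mul, h,
      Matrix.SpecialLinearGroup.coe_mul, mapMatrix_eval_polyFactor, Fin.sum_univ_succ, pow_add,
      smul_mul_smul_comm]

lemma hasColumnDegrees_polyWord {k : ℕ} (m : Fin (k + 1) → ℤ) (hm : ∀ i, m i ≠ 0)
    (g : Fin (k + 1) → SL(2, ℂ)) (hg : ∀ i a b, (g i : Matrix (Fin 2) (Fin 2) ℂ) a b ≠ 0) :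
    ∃ d : Fin 2 → ℕ, (polyWord m g).HasColumnDegrees d ∧ d 0 ≠ d 1 ∧
      max (d 0) (d 1) = 2 * ∑ i, (m i).natAbs := by
  have hshift : ∀ (c : ℕ) (n : ℤ), n ≠ 0 →
      c + diagExponents n 0 ≠ c + diagExponents n 1 ∧
        max (c + diagExponents n 0) (c + diagExponents n 1) = c + 2 * n.natAbs := by
    intro c n hn
    simp only [diagExponents, Matrix.cons_val_zero, Matrix.cons_val_one]
    omega
  induction k with
  | zero =>
    refine ⟨0 + diagExponents (m 0), ?_, by simpa using hshift 0 (m 0) (hm 0)⟩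
    simpa [polyWord, polyFactor] using
      (HasColumnDegrees.map_C (hg 0)).mul_diagonal_X_pow (diagExponents (m 0))
  | succ k ih =>
    obtain ⟨d, hM, hd, hmax⟩ :=
      ih (fun i => m i.castSucc) (fun _ => hm _) (fun i => g i.castSucc) (fun _ => hg _)
    refine ⟨(fun _ => max (d 0) (d 1)) + diagExponents (m (Fin.last _)), ?_, ?_⟩
    · rw [polyWord, List.ofFn_succ', List.prod_concat]
      exact hM.mul_polyFactor hd (m (Fin.last _)) (hg _)
    · simp only [Pi.add_apply]
      rw [Fin.sum_univ_castSucc, (hshift _ _ (hm _)).2, hmax]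
      exact ⟨(hshift _ _ (hm _)).1, by ring⟩

lemma exists_polynomial_eval_eq_pow_mul_trace {k : ℕ} (hk : 1 ≤ k) (m : Fin k → ℤ)
    (hm : ∀ i, m i ≠ 0) (g : Fin k → SL(2, ℂ))
    (hg : ∀ i a b, (g i : Matrix (Fin 2) (Fin 2) ℂ) a b ≠ 0) :
    ∃ P : ℂ[X], P.natDegree = 2 * ∑ i, (m i).natAbs ∧ ∀ z : ℂˣ,
      P.eval (z : ℂ) = (z : ℂ) ^ (∑ i, (m i).natAbs) *
        ((diagWord m g z : SL(2, ℂ)) : Matrix (Fin 2) (Fin 2) ℂ).trace := by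
  obtain ⟨k, rfl⟩ : ∃ n, k = n + 1 := ⟨k - 1, by omega⟩
  obtain ⟨d, hM, hd, hmax⟩ := hasColumnDegrees_polyWord m hm g hg
  refine ⟨(polyWord m g).trace, natDegree_eq_of_degree_eq_some ?_, fun z => ?_⟩
  · rw [hM.degree_trace hd, hmax]
  · rw [← coe_evalRingHom, AddMonoidHom.map_trace, ← RingHom.mapMatrix_apply,
      mapMatrix_eval_polyWord, trace_smul, smul_eq_mul]

lemma finite_setOf_sq_eq_of_eval_eq_pow_mul {K : Type*} [Field K] {P : K[X]} {N : ℕ}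
    {t : Kˣ → K} (hP : ∀ z : Kˣ, P.eval (z : K) = (z : K) ^ N * t z) (hN : N < P.natDegree)
    (x : K) : {z : Kˣ | t z ^ 2 = x}.Finite := by
  have hQ : P ^ 2 - C x * X ^ (2 * N) ≠ 0 := by
    rw [sub_ne_zero]
    refine fun h => (natDegree_C_mul_X_pow_le x (2 * N)).not_gt ?_
    rw [← h, natDegree_pow]
    omega
  refine ((finite_setOfPred_isRoot hQ).preimage Units.val_injective.injOn).subset fun z hz => ?_
  simp only [Set.mem_preimage, Set.mem_ofPred_eq, IsRoot.def, eval_sub, eval_pow, eval_mul,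
    eval_C, eval_X, hP, ← hz.out]
  ring

lemma exists_lt_norm_of_eval_eq_pow_mul {𝕜 : Type*} [NormedField 𝕜] {P : 𝕜[X]} {N : ℕ}
    {t : 𝕜ˣ → 𝕜} (hP : ∀ z : 𝕜ˣ, P.eval (z : 𝕜) = (z : 𝕜) ^ N * t z) (hN : N < P.natDegree)
    (R : ℝ) : ∃ K > 0, ∀ z : 𝕜ˣ, K ≤ ‖(z : 𝕜)‖ → R < ‖t z‖ := by
  have ho : (fun z : 𝕜 => z ^ N) =o[Bornology.cobounded 𝕜] P.eval := by
    simpa using isLittleO_cobounded_of_degree_lt (P := X ^ N) (Q := P)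
      (degree_lt_degree (by rwa [natDegree_X_pow]))
  have hc : 0 < (|R| + 1)⁻¹ := by positivity
  obtain ⟨K, -, hK⟩ := Filter.hasBasis_cobounded_norm.eventually_iff.mp (ho.def hc)
  refine ⟨max K 1, by positivity, fun z hz => ?_⟩
  have hzN : 0 < ‖(z : 𝕜)‖ ^ N := pow_pos (norm_pos_iff.mpr z.ne_zero) N
  have h := hK (le_of_max_le_left hz)
  rw [hP, norm_mul, norm_pow, le_inv_mul_iff₀ (by positivity), mul_comm (‖(z : 𝕜)‖ ^ N)] at h
  linarith [le_abs_self R, le_of_mul_le_mul_right h hzN]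

/-- **Projective Baumslag Lemma, hyperbolic case over `ℂ`.**  Let `m₁, …, m_k` be nonzero
integers and `g₁, …, g_k ∈ SL(2,ℂ)` matrices all of whose entries are nonzero.  Setting
`f(z) = g₁ D(z)^{m₁} g₂ D(z)^{m₂} ⋯ g_k D(z)^{m_k}`, we have:
(1) for every `x ∈ ℂ` the set `{z : (tr f(z))² = x}` is finite, and
(2) `|tr f(z)| → ∞` as `|z| → ∞` or `|z| → 0`. -/
theorem projective_baumslag_hyperbolic (k : ℕ) (hk : 1 ≤ k)
    (m : Fin k → ℤ) (hm : ∀ i : Fin k, m i ≠ 0)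
    (g : Fin k → Matrix.SpecialLinearGroup (Fin 2) ℂ)
    (hg : ∀ i : Fin k, ∀ a b : Fin 2, (g i : Matrix (Fin 2) (Fin 2) ℂ) a b ≠ 0) :
    (∀ x : ℂ,
      {z : ℂˣ |
        (((List.ofFn fun i : Fin k => g i * (diagSL z) ^ (m i)).prod :
            Matrix (Fin 2) (Fin 2) ℂ).trace) ^ 2 = x}.Finite) ∧
    (∀ R : ℝ, 0 < R → ∃ ε > (0 : ℝ), ∃ K > (0 : ℝ), ∀ z : ℂˣ,
      (K ≤ ‖(z : ℂ)‖ ∨ ‖(z : ℂ)‖ ≤ ε) →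
      R < ‖
        (((List.ofFn fun i : Fin k => g i * (diagSL z) ^ (m i)).prod :
            Matrix (Fin 2) (Fin 2) ℂ).trace)‖) := by
  have hN : 0 < ∑ i, (m i).natAbs := (Int.natAbs_pos.mpr (hm ⟨0, hk⟩)).trans_le
    (Finset.single_le_sum (f := fun i => (m i).natAbs) (fun _ _ => Nat.zero_le _)
      (Finset.mem_univ _))
  obtain ⟨P, hPdeg, hP⟩ := exists_polynomial_eval_eq_pow_mul_trace hk m hm g hg
  obtain ⟨Q, hQdeg, hQ⟩ :=
    exists_polynomial_eval_eq_pow_mul_trace hk (-m) (fun i => neg_ne_zero.mpr (hm i)) g hg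
  simp only [Pi.neg_apply, Int.natAbs_neg] at hQdeg hQ
  refine ⟨finite_setOf_sq_eq_of_eval_eq_pow_mul hP (by omega), fun R _ => ?_⟩
  obtain ⟨K, hK, hlarge⟩ := exists_lt_norm_of_eval_eq_pow_mul hP (by omega) R
  obtain ⟨K', hK', hsmall⟩ := exists_lt_norm_of_eval_eq_pow_mul hQ (by omega) R
  refine ⟨K'⁻¹, inv_pos.mpr hK', K, hK, fun z hz => hz.elim (hlarge z) fun hz => ?_⟩
  have hz' : K' ≤ ‖((z⁻¹ : ℂˣ) : ℂ)‖ := by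
    rw [Units.val_inv_eq_inv_val, norm_inv]
    exact (le_inv_comm₀ hK' (norm_pos_iff.mpr z.ne_zero)).mpr hz
  have h := hsmall z⁻¹ hz'
  rw [diagWord_neg_inv] at h
  exact h
end

section
/- Let L be a finitely generated residually finite group and let P ⊆ L be a finite subset. Then for every g ∈ L with g ≠ 1 there exists n₀ ∈ ℕ such that for all n ≥ n₀, g does not lie in the normal closure in L of the set {p^{n!} : p ∈ P}. In other words, the sequence of quotient maps L → L/⟪P^{n!}⟫ is stably injective. -/
/-- A group is residually finite if every nontrivial element survives in some finite
quotient. -/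
def IsResiduallyFinite (L : Type*) [Group L] : Prop :=
  ∀ g : L, g ≠ 1 → ∃ N : Subgroup L, N.Normal ∧ N.FiniteIndex ∧ g ∉ N

/-- For a finitely generated residually finite group `L` and a finite subset `P ⊆ L`,
the sequence of quotient maps `L → L/⟪P^{n!}⟫` is stably injective: every `g ≠ 1`
avoids the normal closure of `{p^{n!} : p ∈ P}` for all sufficiently large `n`. -/
theorem residually_finite_stably_injective {L : Type*} [Group L]
    (hfg : Group.FG L) (hrf : IsResiduallyFinite L) (P : Finset L) :
    ∀ g : L, g ≠ 1 → ∃ n₀ : ℕ, ∀ n : ℕ, n₀ ≤ n →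
      g ∉ Subgroup.normalClosure ((fun p : L => p ^ (Nat.factorial n)) '' (P : Set L)) := by
  intro g hg
  obtain ⟨N, hN, hfi, hgN⟩ := hrf g hg
  refine ⟨N.index, fun n hn hmem => hgN ?_⟩
  have hdvd : N.index ∣ n.factorial :=
    Nat.dvd_factorial (Nat.pos_of_ne_zero hfi.index_ne_zero) hn
  obtain ⟨m, hm⟩ := hdvd
  have hsub : ((fun p : L => p ^ (Nat.factorial n)) '' (P : Set L)) ⊆ N := by
    rintro _ ⟨p, -, rfl⟩
    simp only [hm, pow_mul]
    exact pow_mem (Subgroup.pow_index_mem N p) m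
  exact (Subgroup.normalClosure_le_normal hsub) hmem
end

section
/- Let S¹ denote the circle ℝ/ℤ and let H ≤ G be subgroups of the group of self-homeomorphisms of S¹. For a group K of homeomorphisms of S¹ define the limit set Λ(K) = ⋂_{x ∈ S¹} closure({k(x) : k ∈ K}). Assume that Λ(H) is nonempty and that either (a) H is a normal subgroup of G, or (b) H has finite index in G. Then Λ(H) = Λ(G). -/
/-- The limit set of a group `K` of homeomorphisms of the circle `S¹ = ℝ/ℤ`:
`Λ(K) = ⋂_{x ∈ S¹} closure(K·x)`. -/
def limitSet (K : Subgroup (AddCircle (1 : ℝ) ≃ₜ AddCircle (1 : ℝ))) :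
    Set (AddCircle (1 : ℝ)) :=
  ⋂ x : AddCircle (1 : ℝ), closure {y : AddCircle (1 : ℝ) | ∃ g ∈ K, g x = y}

namespace LimitSetAux

variable {X : Type*} [TopologicalSpace X]

/-- the orbit of a point under a subgroup of homeomorphisms -/
def orb (K : Subgroup (X ≃ₜ X)) (x : X) : Set X := {y | ∃ g ∈ K, g x = y}

lemma mem_orb_self (K : Subgroup (X ≃ₜ X)) (x : X) : x ∈ orb K x :=
  ⟨1, K.one_mem, rfl⟩

/-- if `v` lies in the closure of the `K`-orbit of `w`, the whole orbit closure of `v`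
is contained in that of `w`. -/
lemma orbit_trans (K : Subgroup (X ≃ₜ X)) {v w : X} (h : v ∈ closure (orb K w)) :
    closure (orb K v) ⊆ closure (orb K w) := by
  refine closure_minimal ?_ isClosed_closure
  rintro _ ⟨k, hk, rfl⟩
  have h1 : k v ∈ k '' closure (orb K w) := ⟨v, h, rfl⟩
  rw [k.image_closure] at h1
  refine closure_mono ?_ h1
  rintro _ ⟨u, ⟨g, hg, rfl⟩, rfl⟩
  exact ⟨k * g, K.mul_mem hk hg, rfl⟩

end LimitSetAux

open LimitSetAux

section Main

abbrev Γcirc := AddCircle (1 : ℝ) ≃ₜ AddCircle (1 : ℝ)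

lemma mem_limitSet_iff {K : Subgroup Γcirc} {q : AddCircle (1 : ℝ)} :
    q ∈ limitSet K ↔ ∀ x, q ∈ closure (orb K x) := Set.mem_iInter


/-- Let `H ≤ G` be groups of homeomorphisms of the circle with `Λ(H) ≠ ∅`.  If `H` is
normal in `G`, or `H` has finite index in `G`, then `Λ(H) = Λ(G)`. -/
theorem limitSet_eq_of_normal_or_finiteIndex
    (H G : Subgroup (AddCircle (1 : ℝ) ≃ₜ AddCircle (1 : ℝ)))
    (hHG : H ≤ G) (hne : (limitSet H).Nonempty)
    (hcase : (∀ g ∈ G, ∀ h ∈ H, g * h * g⁻¹ ∈ H) ∨ (H.subgroupOf G).FiniteIndex) :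
    limitSet H = limitSet G := by
  apply Set.Subset.antisymm
  · -- easy: Λ(H) ⊆ Λ(G)
    intro q hq
    rw [mem_limitSet_iff] at hq ⊢
    intro x
    refine closure_mono ?_ (hq x)
    rintro _ ⟨g, hg, rfl⟩
    exact ⟨g, hHG hg, rfl⟩
  · -- hard: Λ(G) ⊆ Λ(H)
    obtain ⟨p, hp⟩ := hne
    rw [mem_limitSet_iff] at hp
    intro q hq
    rw [mem_limitSet_iff] at hq
    rw [mem_limitSet_iff]
    intro y
    -- it suffices to show q ∈ closure (orb H p)
    suffices hqp : q ∈ closure (orb H p) by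
      exact orbit_trans H (hp y) hqp
    rcases hcase with hnormal | hfin
    · -- normal case
      have horb : orb G p ⊆ closure (orb H p) := by
        rintro _ ⟨g, hg, rfl⟩
        have h1 : p ∈ closure (orb H (g⁻¹ p)) := hp (g⁻¹ p)
        have h2 : g p ∈ g '' closure (orb H (g⁻¹ p)) := ⟨p, h1, rfl⟩
        rw [g.image_closure] at h2
        refine closure_mono ?_ h2
        rintro _ ⟨u, ⟨h, hh, rfl⟩, rfl⟩
        refine ⟨g * h * g⁻¹, hnormal g hg h hh, ?_⟩
        rfl
      exact closure_minimal horb isClosed_closure (hq p)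
    · -- finite index case
      haveI := hfin
      set K' : Subgroup ↥G := (H.subgroupOf G).normalCore with hK'
      haveI : K'.FiniteIndex := Subgroup.finiteIndex_normalCore _
      set N : Subgroup Γcirc := K'.map G.subtype with hN
      have hNG : N ≤ G := by
        rintro n ⟨n', _, rfl⟩; exact n'.2
      have hNH : N ≤ H := by
        rintro n ⟨n', hn', rfl⟩
        have := Subgroup.normalCore_le (H.subgroupOf G) hn'
        rwa [Subgroup.mem_subgroupOf] at this
      have hNnormal : ∀ g ∈ G, ∀ n ∈ N, g * n * g⁻¹ ∈ N := by
        rintro g hg n ⟨n', hn', rfl⟩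
        have hc : (⟨g, hg⟩ : ↥G) * n' * (⟨g, hg⟩ : ↥G)⁻¹ ∈ K' :=
          Subgroup.Normal.conj_mem (Subgroup.normalCore_normal _) n' hn' ⟨g, hg⟩
        exact ⟨_, hc, rfl⟩
      -- moving orbit closures of N by elements of G
      have moveN : ∀ g ∈ G, ∀ {z w : AddCircle (1 : ℝ)}, w ∈ closure (orb N z) →
          g w ∈ closure (orb N (g z)) := by
        intro g hg z w hw
        have h2 : g w ∈ g '' closure (orb N z) := ⟨w, hw, rfl⟩
        rw [g.image_closure] at h2
        refine closure_mono ?_ h2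
        rintro _ ⟨u, ⟨n, hn, rfl⟩, rfl⟩
        refine ⟨g * n * g⁻¹, hNnormal g hg n hn, ?_⟩
        show (g * n * g⁻¹) (g z) = g (n z)
        have : g⁻¹ (g z) = z := g.symm_apply_apply z
        show g (n (g⁻¹ (g z))) = g (n z)
        rw [this]
      -- covering lemma
      have cover : ∀ (K : Subgroup Γcirc), K ≤ G → N ≤ K →
          ∀ z w : AddCircle (1 : ℝ), w ∈ closure (orb K z) →
          ∃ t : ↥G, (t : Γcirc) ∈ K ∧ w ∈ closure (orb N ((t : Γcirc) z)) := by
        intro K hKG hNK z w hw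
        set U : Set (AddCircle (1 : ℝ)) :=
          ⋃ c : {c : ↥G ⧸ K' // ((Quotient.out c : ↥G) : Γcirc) ∈ K},
            closure (orb N (((c.1.out : ↥G) : Γcirc) z)) with hU
        have hUclosed : IsClosed U := isClosed_iUnion_of_finite fun _ => isClosed_closure
        have hsub : orb K z ⊆ U := by
          rintro _ ⟨g, hgK, rfl⟩
          have hgG : g ∈ G := hKG hgK
          set gG : ↥G := ⟨g, hgG⟩ with hgGdef
          obtain ⟨n', hout⟩ := QuotientGroup.mk_out_eq_mul K' gG
          set t : ↥G := (QuotientGroup.mk gG : ↥G ⧸ K').out with ht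
          have htK : (t : Γcirc) ∈ K := by
            have h1 : ((n' : ↥G) : Γcirc) ∈ N := ⟨n', n'.2, rfl⟩
            have : (t : Γcirc) = g * ((n' : ↥G) : Γcirc) := by
              rw [hout]; rfl
            rw [this]
            exact K.mul_mem hgK (hNK h1)
          have hmem : g z ∈ orb N ((t : Γcirc) z) := by
            have h1 : ((n' : ↥G) : Γcirc) ∈ N := ⟨n', n'.2, rfl⟩
            have h2 : (t : Γcirc) * ((n' : ↥G) : Γcirc)⁻¹ * (t : Γcirc)⁻¹ ∈ N :=
              hNnormal _ t.2 _ (N.inv_mem h1)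
            refine ⟨_, h2, ?_⟩
            show ((t : Γcirc) * ((n' : ↥G) : Γcirc)⁻¹ * (t : Γcirc)⁻¹ * (t : Γcirc)) z = g z
            have hg_eq : (t : Γcirc) * ((n' : ↥G) : Γcirc)⁻¹ = g := by
              have : (t : Γcirc) = g * ((n' : ↥G) : Γcirc) := by rw [hout]; rfl
              rw [this, mul_assoc, mul_inv_cancel, mul_one]
            rw [inv_mul_cancel_right, hg_eq]
          exact Set.mem_iUnion.2 ⟨⟨_, htK⟩, subset_closure hmem⟩
        have : w ∈ U := closure_minimal hsub hUclosed hw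
        obtain ⟨c, hc⟩ := Set.mem_iUnion.1 this
        exact ⟨c.1.out, c.2, hc⟩
      -- get the two coset representatives
      obtain ⟨t₀, -, hq0⟩ := cover G le_rfl hNG p q (hq p)
      obtain ⟨t₂, ht₂H, hp2⟩ := cover H hHG hNH q p (hp q)
      set c : ↥G := t₀ * t₂ with hc
      -- step 3 : q ∈ closure (orb N (c q))
      have hC : q ∈ closure (orb N ((c : Γcirc) q)) := by
        have h1 : (t₀ : Γcirc) p ∈ closure (orb N ((t₀ : Γcirc) ((t₂ : Γcirc) q))) :=
          moveN _ t₀.2 hp2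
        have h2 : (t₀ : Γcirc) ((t₂ : Γcirc) q) = (c : Γcirc) q := rfl
        rw [h2] at h1
        exact orbit_trans N h1 hq0
      -- step 4 : q ∈ closure (orb N (c^k q)) for all k
      have hPow : ∀ k : ℕ, q ∈ closure (orb N (((c ^ k : ↥G) : Γcirc) q)) := by
        intro k
        induction k with
        | zero =>
          have : ((c ^ 0 : ↥G) : Γcirc) q = q := rfl
          rw [this]
          exact subset_closure (mem_orb_self N q)
        | succ k ih =>
          have h1 : ((c ^ k : ↥G) : Γcirc) q ∈
              closure (orb N (((c ^ k : ↥G) : Γcirc) ((c : Γcirc) q))) :=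
            moveN _ (c ^ k).2 hC
          have h2 : ((c ^ k : ↥G) : Γcirc) ((c : Γcirc) q) =
              ((c ^ (k + 1) : ↥G) : Γcirc) q := by
            rw [pow_succ]; rfl
          rw [h2] at h1
          exact orbit_trans N h1 ih
      -- step 5 : conclude
      set m : ℕ := K'.index with hm
      have hm0 : m ≠ 0 := Subgroup.FiniteIndex.index_ne_zero
      have hcm : (c ^ m : ↥G) ∈ K' := K'.pow_index_mem c
      have hcmN : ((c ^ m : ↥G) : Γcirc) ∈ N := ⟨c ^ m, hcm, rfl⟩
      -- q ∈ closure (orb N ((c^(m-1) * t₀) p))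
      have hstep : q ∈ closure (orb N (((c ^ (m - 1) * t₀ : ↥G) : Γcirc) p)) := by
        have h1 : ((c ^ (m - 1) : ↥G) : Γcirc) q ∈
            closure (orb N (((c ^ (m - 1) : ↥G) : Γcirc) ((t₀ : Γcirc) p))) :=
          moveN _ (c ^ (m - 1)).2 hq0
        have h2 : ((c ^ (m - 1) : ↥G) : Γcirc) ((t₀ : Γcirc) p) =
            ((c ^ (m - 1) * t₀ : ↥G) : Γcirc) p := rfl
        rw [h2] at h1
        exact orbit_trans N h1 (hPow (m - 1))
      -- the element c^(m-1) * t₀ is in H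
      have hH : ((c ^ (m - 1) * t₀ : ↥G) : Γcirc) ∈ H := by
        have key : (c ^ (m - 1) * t₀ : ↥G) = c ^ m * t₂⁻¹ := by
          have hmsucc : m - 1 + 1 = m := Nat.succ_pred_eq_of_ne_zero hm0
          have : c ^ m = c ^ (m - 1) * c := by rw [← pow_succ, hmsucc]
          rw [this, hc]
          group
        rw [key]
        have h1 : ((c ^ m : ↥G) : Γcirc) ∈ H := hNH hcmN
        have h2 : ((t₂⁻¹ : ↥G) : Γcirc) ∈ H := by
          have : ((t₂⁻¹ : ↥G) : Γcirc) = (t₂ : Γcirc)⁻¹ := rfl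
          rw [this]; exact H.inv_mem ht₂H
        have : ((c ^ m * t₂⁻¹ : ↥G) : Γcirc) = ((c ^ m : ↥G) : Γcirc) * ((t₂⁻¹ : ↥G) : Γcirc) := rfl
        rw [this]
        exact H.mul_mem h1 h2
      -- finish: orb N (h p) ⊆ orb H p
      refine closure_mono ?_ hstep
      rintro _ ⟨n, hn, rfl⟩
      exact ⟨n * ((c ^ (m - 1) * t₀ : ↥G) : Γcirc),
        H.mul_mem (hNH hn) hH, rfl⟩

end Main
end

section
/- Let L be a countable group and let ρ₀, ρ₁ be homomorphisms from L to the group of orientation-preserving homeomorphisms of ℝ (equivalently, order-automorphisms of ℝ). Then the following are equivalent: (i) there exists a nondecreasing map h : ℝ → ℝ with h(x) → +∞ as x → +∞ and h(x) → −∞ as x → −∞ (i.e. h is proper) such that h ∘ ρ₀(g) = ρ₁(g) ∘ h for all g ∈ L; (ii) there exist a homomorphism ρ from L to the group of orientation-preserving homeomorphisms of ℝ and surjective nondecreasing maps h₀, h₁ : ℝ → ℝ such that hᵢ ∘ ρ(g) = ρᵢ(g) ∘ hᵢ for all g ∈ L and i = 0, 1. -/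
open Filter

open Set


namespace RBaux

variable {L : Type*} [Group L]

lemma iso_cancel (ρ : L →* (ℝ ≃o ℝ)) (g : L) (y : ℝ) : ρ g (ρ g⁻¹ y) = y := by
  have : ρ g * ρ g⁻¹ = 1 := by rw [← map_mul, mul_inv_cancel, map_one]
  calc ρ g (ρ g⁻¹ y) = (ρ g * ρ g⁻¹) y := rfl
    _ = y := by rw [this]; rfl

variable {h : ℝ → ℝ}

noncomputable def hl (h : ℝ → ℝ) (x : ℝ) : ℝ := sSup (h '' Iio x)
noncomputable def hr (h : ℝ → ℝ) (x : ℝ) : ℝ := sInf (h '' Ioi x)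
def S (h : ℝ → ℝ) (t : ℝ) : Set ℝ := {x : ℝ | x + h x ≤ t}
noncomputable def pp (h : ℝ → ℝ) (t : ℝ) : ℝ := sSup (S h t)
noncomputable def qq (h : ℝ → ℝ) (t : ℝ) : ℝ := t - pp h t

lemma img_Iio_ne (x : ℝ) : (h '' Iio x).Nonempty := (nonempty_Iio).image h
lemma img_Ioi_ne (x : ℝ) : (h '' Ioi x).Nonempty := (nonempty_Ioi).image h
lemma img_Iio_bdd (hm : Monotone h) (x : ℝ) : BddAbove (h '' Iio x) :=
  ⟨h x, by rintro b ⟨z, hz, rfl⟩; exact hm hz.le⟩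
lemma img_Ioi_bdd (hm : Monotone h) (x : ℝ) : BddBelow (h '' Ioi x) :=
  ⟨h x, by rintro b ⟨z, hz, rfl⟩; exact hm hz.le⟩

lemma hl_le (hm : Monotone h) (x : ℝ) : hl h x ≤ h x :=
  csSup_le (img_Iio_ne x) (by rintro b ⟨z, hz, rfl⟩; exact hm hz.le)
lemma le_hr (hm : Monotone h) (x : ℝ) : h x ≤ hr h x :=
  le_csInf (img_Ioi_ne x) (by rintro b ⟨z, hz, rfl⟩; exact hm hz.le)
lemma le_hl (hm : Monotone h) {x' x : ℝ} (hx : x' < x) : h x' ≤ hl h x :=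
  le_csSup (img_Iio_bdd hm x) ⟨x', hx, rfl⟩
lemma hr_le (hm : Monotone h) {x x' : ℝ} (hx : x < x') : hr h x ≤ h x' :=
  csInf_le (img_Ioi_bdd hm x) ⟨x', hx, rfl⟩

lemma S_nonempty (hb : Tendsto h atBot atBot) (t : ℝ) : (S h t).Nonempty := by
  obtain ⟨x, hx1, hx2⟩ := ((hb.eventually (eventually_le_atBot t)).and
    (eventually_le_atBot (0 : ℝ))).exists
  exact ⟨x, by simpa [S] using add_le_add hx2 hx1⟩

lemma S_bddAbove (hm : Monotone h) (ht : Tendsto h atTop atTop) (t : ℝ) :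
    BddAbove (S h t) := by
  obtain ⟨x₀, hx1, hx2⟩ := ((ht.eventually (eventually_ge_atTop t)).and
    (eventually_ge_atTop (0 : ℝ))).exists
  refine ⟨x₀, fun x hx => ?_⟩
  by_contra hc
  push_neg at hc
  have : t < x + h x := by
    have := hm hc.le
    nlinarith
  exact absurd hx (by simpa [S] using this.not_ge)

lemma mem_S_of_lt_pp (hm : Monotone h) (hb : Tendsto h atBot atBot)
    {t x' : ℝ} (hx : x' < pp h t) : x' ∈ S h t := by
  obtain ⟨s, hs, hlt⟩ := exists_lt_of_lt_csSup (S_nonempty hb t) hx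
  exact le_trans (add_le_add hlt.le (hm hlt.le)) hs

lemma lt_of_pp_lt (hm : Monotone h) (ht : Tendsto h atTop atTop)
    {t x' : ℝ} (hx : pp h t < x') : t < x' + h x' := by
  by_contra hc
  push_neg at hc
  exact absurd (le_csSup (S_bddAbove hm ht t) hc) hx.not_ge

lemma pp_add (hm : Monotone h) (hb : Tendsto h atBot atBot) (ht : Tendsto h atTop atTop)
    {x y : ℝ} (h1 : hl h x ≤ y) (h2 : y ≤ hr h x) : pp h (x + y) = x := by
  refine le_antisymm (csSup_le (S_nonempty hb _) fun x' hx' => ?_) ?_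
  · by_contra hc
    push_neg at hc
    have hy : y ≤ h x' := le_trans h2 (hr_le hm hc)
    have hmem : x' + h x' ≤ x + y := hx'
    linarith
  · have hsub : Iio x ⊆ S h (x + y) := fun x' hx' => by
      have h3 : h x' ≤ hl h x := le_hl hm hx'
      have h4 : x' < x := hx'
      simp only [S, mem_setOf_eq]
      linarith
    calc x = sSup (Iio x) := csSup_Iio.symm
      _ ≤ sSup (S h (x + y)) := csSup_le_csSup (S_bddAbove hm ht _) nonempty_Iio hsub

lemma pp_apply_add (hm : Monotone h) (hb : Tendsto h atBot atBot) (ht : Tendsto h atTop atTop)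
    (x : ℝ) : pp h (x + h x) = x := pp_add hm hb ht (hl_le hm x) (le_hr hm x)

lemma qq_le_hr (hm : Monotone h) (hb : Tendsto h atBot atBot) (ht : Tendsto h atTop atTop)
    (t : ℝ) : qq h t ≤ hr h (pp h t) := by
  refine le_csInf (img_Ioi_ne _) ?_
  rintro b ⟨x', hx', rfl⟩
  by_contra hc
  push_neg at hc
  have h1 : pp h t < t - h x' := by simp only [qq] at hc; linarith
  obtain ⟨x'', hx''1, hx''2⟩ := exists_between (lt_min hx' h1)
  have hlt := lt_of_pp_lt hm ht hx''1
  have ha : x'' < x' := lt_of_lt_of_le hx''2 (min_le_left x' (t - h x'))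
  have hb' : x'' < t - h x' := lt_of_lt_of_le hx''2 (min_le_right x' (t - h x'))
  have := hm ha.le
  linarith

lemma hl_pp_le (hm : Monotone h) (hb : Tendsto h atBot atBot) (ht : Tendsto h atTop atTop)
    (t : ℝ) : hl h (pp h t) ≤ qq h t := by
  refine csSup_le (img_Iio_ne _) ?_
  rintro b ⟨x', hx', rfl⟩
  by_contra hc
  push_neg at hc
  have h1 : t - h x' < pp h t := by simp only [qq] at hc; linarith
  obtain ⟨x'', hx''1, hx''2⟩ := exists_between (max_lt hx' h1)
  have hmem := mem_S_of_lt_pp hm hb hx''2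
  have hle : h x' ≤ h x'' := hm (le_of_lt (lt_of_le_of_lt (le_max_left _ _) hx''1))
  have : t - h x' < x'' := lt_of_le_of_lt (le_max_right _ _) hx''1
  simp only [S, mem_setOf_eq] at hmem
  linarith

lemma pp_mono (hm : Monotone h) (hb : Tendsto h atBot atBot) (ht : Tendsto h atTop atTop) :
    Monotone (pp h) := fun t t' htt =>
  csSup_le_csSup (S_bddAbove hm ht t') (S_nonempty hb t)
    (fun x hx => le_trans hx htt)

lemma qq_mono (hm : Monotone h) (hb : Tendsto h atBot atBot) (ht : Tendsto h atTop atTop) :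
    Monotone (qq h) := by
  intro t t' htt
  rcases eq_or_lt_of_le (pp_mono hm hb ht htt) with heq | hlt
  · simp only [qq, ← heq]; linarith
  · obtain ⟨x', h1, h2⟩ := exists_between hlt
    calc qq h t ≤ hr h (pp h t) := qq_le_hr hm hb ht t
      _ ≤ h x' := hr_le hm h1
      _ ≤ hl h (pp h t') := le_hl hm h2
      _ ≤ qq h t' := hl_pp_le hm hb ht t'

lemma qq_surj (hm : Monotone h) (hb : Tendsto h atBot atBot) (ht : Tendsto h atTop atTop)
    (y : ℝ) : ∃ t, qq h t = y := by
  set T : Set ℝ := {x : ℝ | h x ≤ y} with hT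
  have hTne : T.Nonempty := (hb.eventually (eventually_le_atBot y)).exists
  have hTbdd : BddAbove T := by
    obtain ⟨x₀, hx₀⟩ := (ht.eventually (eventually_ge_atTop (y + 1))).exists
    refine ⟨x₀, fun x hx => ?_⟩
    by_contra hc
    push_neg at hc
    have : y + 1 ≤ h x := le_trans hx₀ (hm hc.le)
    simp only [hT, mem_setOf_eq] at hx
    linarith
  set c := sSup T with hc
  have h1 : hl h c ≤ y := by
    refine csSup_le (img_Iio_ne _) ?_
    rintro b ⟨x', hx', rfl⟩
    obtain ⟨s, hs, hlt⟩ := exists_lt_of_lt_csSup hTne hx'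
    exact le_trans (hm hlt.le) hs
  have h2 : y ≤ hr h c := by
    refine le_csInf (img_Ioi_ne _) ?_
    rintro b ⟨x', hx', rfl⟩
    by_contra hcon
    push_neg at hcon
    exact absurd (le_csSup hTbdd hcon.le) hx'.not_ge
  refine ⟨c + y, ?_⟩
  simp only [qq, pp_add hm hb ht h1 h2]
  ring

-- equivariance of hl, hr
lemma hl_equiv (ρ₀ ρ₁ : L →* (ℝ ≃o ℝ)) (hm : Monotone h)
    (heq : ∀ (g : L) (x : ℝ), h (ρ₀ g x) = ρ₁ g (h x)) (g : L) (x : ℝ) :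
    hl h (ρ₀ g x) = ρ₁ g (hl h x) := by
  have himg : h '' Iio (ρ₀ g x) = ⇑(ρ₁ g) '' (h '' Iio x) := by
    rw [← OrderIso.image_Iio, image_image, image_image]
    exact image_congr (fun z _ => heq g z)
  rw [hl, himg, ← OrderIso.map_csSup' (ρ₁ g) (img_Iio_ne x) (img_Iio_bdd hm x)]
  rfl

lemma hr_equiv (ρ₀ ρ₁ : L →* (ℝ ≃o ℝ)) (hm : Monotone h)
    (heq : ∀ (g : L) (x : ℝ), h (ρ₀ g x) = ρ₁ g (h x)) (g : L) (x : ℝ) :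
    hr h (ρ₀ g x) = ρ₁ g (hr h x) := by
  have himg : h '' Ioi (ρ₀ g x) = ⇑(ρ₁ g) '' (h '' Ioi x) := by
    rw [← OrderIso.image_Ioi, image_image, image_image]
    exact image_congr (fun z _ => heq g z)
  rw [hr, himg, ← OrderIso.map_csInf' (ρ₁ g) (img_Ioi_ne x) (img_Ioi_bdd hm x)]
  rfl

lemma iso_cancel' (ρ : L →* (ℝ ≃o ℝ)) (g : L) (y : ℝ) : ρ g⁻¹ (ρ g y) = y := by
  simpa using iso_cancel ρ g⁻¹ y

noncomputable def F (ρ₀ ρ₁ : L →* (ℝ ≃o ℝ)) (h : ℝ → ℝ) (g : L) (t : ℝ) : ℝ :=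
  ρ₀ g (pp h t) + ρ₁ g (qq h t)

variable (ρ₀ ρ₁ : L →* (ℝ ≃o ℝ))

lemma pp_F (hm : Monotone h) (hb : Tendsto h atBot atBot) (ht : Tendsto h atTop atTop)
    (heq : ∀ (g : L) (x : ℝ), h (ρ₀ g x) = ρ₁ g (h x)) (g : L) (t : ℝ) :
    pp h (F ρ₀ ρ₁ h g t) = ρ₀ g (pp h t) := by
  apply pp_add hm hb ht
  · rw [hl_equiv ρ₀ ρ₁ hm heq]
    exact (ρ₁ g).monotone (hl_pp_le hm hb ht t)
  · rw [hr_equiv ρ₀ ρ₁ hm heq]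
    exact (ρ₁ g).monotone (qq_le_hr hm hb ht t)

lemma qq_F (hm : Monotone h) (hb : Tendsto h atBot atBot) (ht : Tendsto h atTop atTop)
    (heq : ∀ (g : L) (x : ℝ), h (ρ₀ g x) = ρ₁ g (h x)) (g : L) (t : ℝ) :
    qq h (F ρ₀ ρ₁ h g t) = ρ₁ g (qq h t) := by
  have h2 := pp_F ρ₀ ρ₁ hm hb ht heq g t
  rw [qq, h2, F]
  simp only [qq]
  ring

lemma F_inv (hm : Monotone h) (hb : Tendsto h atBot atBot) (ht : Tendsto h atTop atTop)
    (heq : ∀ (g : L) (x : ℝ), h (ρ₀ g x) = ρ₁ g (h x)) (g : L) (t : ℝ) :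
    F ρ₀ ρ₁ h g⁻¹ (F ρ₀ ρ₁ h g t) = t := by
  have hsum : pp h t + qq h t = t := by simp [qq]
  calc F ρ₀ ρ₁ h g⁻¹ (F ρ₀ ρ₁ h g t)
      = ρ₀ g⁻¹ (pp h (F ρ₀ ρ₁ h g t)) + ρ₁ g⁻¹ (qq h (F ρ₀ ρ₁ h g t)) := rfl
    _ = ρ₀ g⁻¹ (ρ₀ g (pp h t)) + ρ₁ g⁻¹ (ρ₁ g (qq h t)) := by
        rw [pp_F ρ₀ ρ₁ hm hb ht heq, qq_F ρ₀ ρ₁ hm hb ht heq]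
    _ = pp h t + qq h t := by rw [iso_cancel', iso_cancel']
    _ = t := hsum

lemma F_mul (hm : Monotone h) (hb : Tendsto h atBot atBot) (ht : Tendsto h atTop atTop)
    (heq : ∀ (g : L) (x : ℝ), h (ρ₀ g x) = ρ₁ g (h x)) (g g' : L) (t : ℝ) :
    F ρ₀ ρ₁ h (g * g') t = F ρ₀ ρ₁ h g (F ρ₀ ρ₁ h g' t) := by
  calc F ρ₀ ρ₁ h (g * g') t = ρ₀ (g * g') (pp h t) + ρ₁ (g * g') (qq h t) := rfl
    _ = ρ₀ g (ρ₀ g' (pp h t)) + ρ₁ g (ρ₁ g' (qq h t)) := by rw [map_mul, map_mul]; rfl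
    _ = ρ₀ g (pp h (F ρ₀ ρ₁ h g' t)) + ρ₁ g (qq h (F ρ₀ ρ₁ h g' t)) := by
        rw [pp_F ρ₀ ρ₁ hm hb ht heq, qq_F ρ₀ ρ₁ hm hb ht heq]
    _ = F ρ₀ ρ₁ h g (F ρ₀ ρ₁ h g' t) := rfl

lemma F_strictMono (hm : Monotone h) (hb : Tendsto h atBot atBot) (ht : Tendsto h atTop atTop)
    (g : L) : StrictMono (F ρ₀ ρ₁ h g) := by
  intro t t' hlt
  have hp := pp_mono hm hb ht hlt.le
  have hq := qq_mono hm hb ht hlt.le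
  have hsum : pp h t + qq h t < pp h t' + qq h t' := by simp only [qq]; linarith
  rcases lt_or_eq_of_le hp with hp' | hp'
  · exact add_lt_add_of_lt_of_le ((ρ₀ g).strictMono hp') ((ρ₁ g).monotone hq)
  · have hq' : qq h t < qq h t' := by rw [hp'] at hsum; linarith
    exact add_lt_add_of_le_of_lt (le_of_eq (congrArg _ hp')) ((ρ₁ g).strictMono hq')

lemma F_surj (hm : Monotone h) (hb : Tendsto h atBot atBot) (ht : Tendsto h atTop atTop)
    (heq : ∀ (g : L) (x : ℝ), h (ρ₀ g x) = ρ₁ g (h x)) (g : L) :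
    Function.Surjective (F ρ₀ ρ₁ h g) := by
  intro s
  refine ⟨F ρ₀ ρ₁ h g⁻¹ s, ?_⟩
  have := F_inv ρ₀ ρ₁ hm hb ht heq g⁻¹ s
  rwa [inv_inv] at this

end RBaux


/-- Semi-conjugacy of actions on the line by (possibly discontinuous) proper nondecreasing
maps is "generated" by continuous surjective semi-conjugating maps: for actions
`ρ₀, ρ₁ : L → Homeo₊(ℝ)` of a countable group, there is a proper nondecreasing `h` with
`h ∘ ρ₀(g) = ρ₁(g) ∘ h` for all `g` if and only if there exist an action `ρ` and surjective
nondecreasing maps `h₀, h₁` with `hᵢ ∘ ρ(g) = ρᵢ(g) ∘ hᵢ` for all `g`. -/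
theorem real_semiconjugacy_common_blowup {L : Type*} [Group L] [Countable L]
    (ρ₀ ρ₁ : L →* (ℝ ≃o ℝ)) :
    (∃ h : ℝ → ℝ, Monotone h ∧
        Tendsto h atTop atTop ∧ Tendsto h atBot atBot ∧
        ∀ (g : L) (x : ℝ), h (ρ₀ g x) = ρ₁ g (h x)) ↔
    (∃ ρ : L →* (ℝ ≃o ℝ), ∃ h₀ h₁ : ℝ → ℝ,
        Monotone h₀ ∧ Function.Surjective h₀ ∧
        Monotone h₁ ∧ Function.Surjective h₁ ∧
        (∀ (g : L) (x : ℝ), h₀ (ρ g x) = ρ₀ g (h₀ x)) ∧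
        (∀ (g : L) (x : ℝ), h₁ (ρ g x) = ρ₁ g (h₁ x))) := by
  constructor
  · rintro ⟨h, hm, ht, hb, heq⟩
    refine ⟨MonoidHom.mk' (fun g => StrictMono.orderIsoOfSurjective (RBaux.F ρ₀ ρ₁ h g)
      (RBaux.F_strictMono ρ₀ ρ₁ hm hb ht g) (RBaux.F_surj ρ₀ ρ₁ hm hb ht heq g))
      (fun a b => by
        ext t
        exact RBaux.F_mul ρ₀ ρ₁ hm hb ht heq a b t),
      RBaux.pp h, RBaux.qq h,
      RBaux.pp_mono hm hb ht,
      fun x => ⟨x + h x, RBaux.pp_apply_add hm hb ht x⟩,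
      RBaux.qq_mono hm hb ht,
      RBaux.qq_surj hm hb ht,
      fun g t => RBaux.pp_F ρ₀ ρ₁ hm hb ht heq g t,
      fun g t => RBaux.qq_F ρ₀ ρ₁ hm hb ht heq g t⟩
  · rintro ⟨ρ, h₀, h₁, hm0, hs0, hm1, hs1, he0, he1⟩
    set T : ℝ → Set ℝ := fun x => {y : ℝ | h₀ y ≤ x} with hTdef
    have hTne : ∀ x, (T x).Nonempty := fun x => by
      obtain ⟨y, hy⟩ := hs0 x
      exact ⟨y, hy.le⟩
    have hTbdd : ∀ x, BddAbove (T x) := fun x => by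
      obtain ⟨w, hw⟩ := hs0 (x + 1)
      refine ⟨w, fun y hy => ?_⟩
      by_contra hc
      push_neg at hc
      have h1 : h₀ w ≤ h₀ y := hm0 hc.le
      have h2 : h₀ y ≤ x := hy
      rw [hw] at h1
      linarith
    set s : ℝ → ℝ := fun x => sSup (T x) with hsdef
    have hsmono : Monotone s := fun x x' hxx =>
      csSup_le_csSup (hTbdd x') (hTne x) (fun y hy => le_trans hy hxx)
    have hsect : ∀ y, y ≤ s (h₀ y) := fun y =>
      le_csSup (hTbdd _) (le_refl (h₀ y))
    have hsequiv : ∀ (g : L) (x : ℝ), s (ρ₀ g x) = ρ g (s x) := by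
      intro g x
      have himg : T (ρ₀ g x) = ⇑(ρ g) '' T x := by
        ext y
        constructor
        · intro hy
          refine ⟨ρ g⁻¹ y, ?_, RBaux.iso_cancel ρ g y⟩
          have h1 : h₀ (ρ g (ρ g⁻¹ y)) = ρ₀ g (h₀ (ρ g⁻¹ y)) := he0 g (ρ g⁻¹ y)
          rw [RBaux.iso_cancel ρ g y] at h1
          have h2 : h₀ y ≤ ρ₀ g x := hy
          rw [h1] at h2
          exact (OrderIso.le_iff_le (ρ₀ g)).mp h2
        · rintro ⟨z, hz, rfl⟩
          have h1 : h₀ (ρ g z) = ρ₀ g (h₀ z) := he0 g z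
          have h2 : h₀ z ≤ x := hz
          show h₀ (ρ g z) ≤ ρ₀ g x
          rw [h1]
          exact (ρ₀ g).monotone h2
      show sSup (T (ρ₀ g x)) = ρ g (sSup (T x))
      rw [himg, ← OrderIso.map_csSup' (ρ g) (hTne x) (hTbdd x)]
    refine ⟨h₁ ∘ s, hm1.comp hsmono, ?_, ?_, ?_⟩
    · apply tendsto_atTop_atTop_of_monotone (hm1.comp hsmono)
      intro b
      obtain ⟨y, hy⟩ := hs1 b
      exact ⟨h₀ y, by simpa [hy.symm] using hm1 (hsect y)⟩
    · apply tendsto_atBot_atBot_of_monotone (hm1.comp hsmono)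
      intro b
      obtain ⟨y, hy⟩ := hs1 b
      refine ⟨h₀ y - 1, ?_⟩
      have hsle : s (h₀ y - 1) ≤ y := by
        refine csSup_le (hTne _) (fun z hz => ?_)
        by_contra hc
        push_neg at hc
        have h1 : h₀ y ≤ h₀ z := hm0 hc.le
        have h2 : h₀ z ≤ h₀ y - 1 := hz
        linarith
      simpa [hy.symm] using hm1 hsle
    · intro g x
      show h₁ (s (ρ₀ g x)) = ρ₁ g (h₁ (s x))
      rw [hsequiv g x, he1 g (s x)]
end

section
/- Let L be a countable group and let ρ₀, ρ₁ : L → Homeo_ℤ(ℝ) be group homomorphisms, where Homeo_ℤ(ℝ) is the group of orientation-preserving homeomorphisms f of ℝ satisfying f(x+1) = f(x)+1 for all x (the group of units of the monoid CircleDeg1Lift of monotone degree-one maps). Then the following are equivalent: (i) there exists a monotone degree-one map h ∈ CircleDeg1Lift (not assumed continuous, surjective, or injective) such that h ∘ ρ₀(g) = ρ₁(g) ∘ h for all g ∈ L; (ii) there exist a homomorphism ρ : L → Homeo_ℤ(ℝ) and surjective monotone degree-one maps h₀, h₁ ∈ CircleDeg1Lift such that hᵢ ∘ ρ(g) = ρᵢ(g)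 ∘ hᵢ for all g ∈ L and i = 0, 1. -/
/-!
Fill in the jumps of the graph of `h` by vertical segments. The resulting monotone curve in `ℝ²`
meets every line `x + y = 2 * t` exactly once, and it is invariant under
`(x, y) ↦ (ρ₀ g x, ρ₁ g y)` because `h` semiconjugates `ρ₀` to `ρ₁`. Parametrized by `t`, the
curve carries an action of `L` by homeomorphisms, and its two coordinates are surjective monotone
degree-one maps semiconjugating this action to `ρ₀` and `ρ₁`. Conversely, given a common blow-up
`(ρ, h₀, h₁)`, the supremum of `h₁` over `h₀⁻¹ (-∞, x]` semiconjugates `ρ₀` to `ρ₁`.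
-/

open Set Function Filter

namespace CircleDeg1Lift

theorem nonempty_setOf_map_le (f : CircleDeg1Lift) (x : ℝ) : {y | f y ≤ x}.Nonempty :=
  (f.tendsto_atBot.eventually (eventually_le_atBot x)).exists

theorem bddAbove_setOf_map_le (f : CircleDeg1Lift) (x : ℝ) : BddAbove {y | f y ≤ x} := by
  obtain ⟨N, hN⟩ := eventually_atTop.1 (f.tendsto_atTop.eventually_gt_atTop x)
  exact ⟨N, fun y hy => le_of_not_ge fun hNy => (hN y hNy).not_ge hy⟩

theorem map_le_of_lt_sSup_setOf_map_le (f : CircleDeg1Lift) {x y : ℝ}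
    (hy : y < sSup {z | f z ≤ x}) : f y ≤ x := by
  obtain ⟨z, hz, hyz⟩ := exists_lt_of_lt_csSup (nonempty_setOf_map_le f x) hy
  exact (f.mono hyz.le).trans hz

theorem lt_map_of_sSup_setOf_map_le_lt (f : CircleDeg1Lift) {x y : ℝ}
    (hy : sSup {z | f z ≤ x} < y) : x < f y :=
  lt_of_not_ge fun hfy => hy.not_ge (le_csSup (bddAbove_setOf_map_le f x) hfy)

theorem sSup_image_setOf_map_le_semiconj {h₀ h₁ : CircleDeg1Lift} {g g₀ g₁ : CircleDeg1Liftˣ}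
    (hg₀ : Semiconj h₀ g g₀) (hg₁ : Semiconj h₁ g g₁) (x : ℝ) :
    sSup (h₁ '' {y | h₀ y ≤ g₀ x}) = g₁ (sSup (h₁ '' {y | h₀ y ≤ x})) := by
  have hpre : {y | h₀ y ≤ g₀ x} = g '' {y | h₀ y ≤ x} := by
    ext y
    obtain ⟨z, rfl⟩ := (toOrderIso g).surjective y
    have hinj : Injective g := (toOrderIso g).injective
    rw [coe_toOrderIso, hinj.mem_set_image, mem_ofPred_eq, mem_ofPred_eq, hg₀ z]
    exact (toOrderIso g₀).le_iff_le
  rw [hpre, image_image, ← coe_toOrderIso g₁, (toOrderIso g₁).map_csSup'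
    ((nonempty_setOf_map_le h₀ x).image h₁)
    (h₁.monotone.map_bddAbove (bddAbove_setOf_map_le h₀ x)), image_image]
  exact congrArg sSup (image_congr fun y _ => hg₁ y)

/-- A monotone choice of `h₁ ∘ h₀⁻¹`: the supremum picks a value where `h₀` is not injective. -/
noncomputable def supCompInv (h₁ h₀ : CircleDeg1Lift) : CircleDeg1Lift where
  toFun x := sSup (h₁ '' {y | h₀ y ≤ x})
  monotone' _ _ hxx' := csSup_le_csSup (h₁.monotone.map_bddAbove (bddAbove_setOf_map_le h₀ _))
    ((nonempty_setOf_map_le h₀ _).image h₁) (image_mono fun _ hy => le_trans hy hxx')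
  map_add_one' x := by
    have htr (f : CircleDeg1Lift) : Semiconj f (translate (.ofAdd 1)) (translate (.ofAdd 1)) :=
      fun y => by simp [map_one_add]
    simpa [add_comm] using sSup_image_setOf_map_le_semiconj (htr h₀) (htr h₁) x

theorem supCompInv_apply (h₁ h₀ : CircleDeg1Lift) (x : ℝ) :
    supCompInv h₁ h₀ x = sSup (h₁ '' {y | h₀ y ≤ x}) := rfl

theorem semiconjBy_supCompInv {h₀ h₁ : CircleDeg1Lift} {g g₀ g₁ : CircleDeg1Liftˣ}
    (hg₀ : SemiconjBy h₀ g g₀) (hg₁ : SemiconjBy h₁ g g₁) :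
    SemiconjBy (supCompInv h₁ h₀) g₀ g₁ :=
  semiconjBy_iff_semiconj.2 <| sSup_image_setOf_map_le_semiconj
    (semiconjBy_iff_semiconj.1 hg₀) (semiconjBy_iff_semiconj.1 hg₁)

/-- The graph of `h` with its jumps filled in by vertical segments. -/
def FilledGraph (h : CircleDeg1Lift) (x y : ℝ) : Prop :=
  (∀ x' < x, h x' ≤ y) ∧ ∀ x', x < x' → y ≤ h x'

theorem FilledGraph.semiconj {h : CircleDeg1Lift} {g₀ g₁ : CircleDeg1Liftˣ}
    (hg : SemiconjBy h g₀ g₁) {x y : ℝ} (hxy : FilledGraph h x y) :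
    FilledGraph h (g₀ x) (g₁ y) := by
  have hg' := semiconjBy_iff_semiconj.1 hg
  refine ⟨(toOrderIso g₀).surjective.forall.2 fun z hz => ?_,
    (toOrderIso g₀).surjective.forall.2 fun z hz => ?_⟩
  · rw [coe_toOrderIso, hg' z]
    exact (g₁ : CircleDeg1Lift).mono (hxy.1 z ((toOrderIso g₀).lt_iff_lt.1 hz))
  · rw [coe_toOrderIso, hg' z]
    exact (g₁ : CircleDeg1Lift).mono (hxy.2 z ((toOrderIso g₀).lt_iff_lt.1 hz))

variable (h : CircleDeg1Lift)

noncomputable def midpointId : CircleDeg1Lift where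
  toFun x := (x + h x) / 2
  monotone' _ _ hxx' := by have := h.mono hxx'; linarith
  map_add_one' x := by rw [h.map_add_one]; ring

theorem midpointId_apply (x : ℝ) : midpointId h x = (x + h x) / 2 := rfl

/-- The filled graph of `h` meets each line `x + y = 2 * t` in exactly one point;
`graphFst` and `graphSnd` are its coordinates. -/
noncomputable def graphFst : CircleDeg1Lift := supCompInv 1 (midpointId h)

theorem graphFst_apply (t : ℝ) : graphFst h t = sSup {x | midpointId h x ≤ t} := by
  rw [graphFst, supCompInv_apply, coe_one, image_id]

theorem graphFst_le_graphFst_add {s t : ℝ} (hst : s ≤ t) :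
    graphFst h t ≤ graphFst h s + 2 * (t - s) := by
  rw [graphFst_apply, graphFst_apply]
  refine csSup_le (nonempty_setOf_map_le (midpointId h) t) fun x hx => ?_
  have hmem : midpointId h (x - 2 * (t - s)) ≤ s := by
    have := h.mono (show x - 2 * (t - s) ≤ x by linarith)
    have hx' : midpointId h x ≤ t := hx
    rw [midpointId_apply] at hx' ⊢
    linarith
  linarith [le_csSup (bddAbove_setOf_map_le (midpointId h) s) hmem]

noncomputable def graphSnd : CircleDeg1Lift where
  toFun t := 2 * t - graphFst h t
  monotone' s t hst := by linarith [graphFst_le_graphFst_add h hst]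
  map_add_one' t := by rw [(graphFst h).map_add_one]; ring

theorem graphSnd_apply (t : ℝ) : graphSnd h t = 2 * t - graphFst h t := rfl

theorem filledGraph_graphFst (t : ℝ) : FilledGraph h (graphFst h t) (graphSnd h t) := by
  rw [graphSnd_apply, graphFst_apply]
  refine ⟨fun x' hx' => ?_, fun x' hx' => ?_⟩
  · suffices sSup {x | midpointId h x ≤ t} ≤ 2 * t - h x' by linarith
    refine le_of_forall_lt_imp_le_of_dense fun u hu => ?_
    have hv := map_le_of_lt_sSup_setOf_map_le (midpointId h) (max_lt hu hx')
    rw [midpointId_apply] at hv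
    linarith [h.mono (le_max_right u x'), le_max_left u x']
  · suffices 2 * t - h x' ≤ sSup {x | midpointId h x ≤ t} by linarith
    refine le_of_forall_gt_imp_ge_of_dense fun u hu => ?_
    have hv := lt_map_of_sSup_setOf_map_le_lt (midpointId h) (lt_min hu hx')
    rw [midpointId_apply] at hv
    linarith [h.mono (min_le_right u x'), min_le_left u x']

theorem graphFst_midpoint {x y : ℝ} (hxy : FilledGraph h x y) :
    graphFst h ((x + y) / 2) = x := by
  rw [graphFst_apply]
  refine le_antisymm (csSup_le (nonempty_setOf_map_le (midpointId h) _) fun z hz => ?_)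
    (le_of_forall_lt_imp_le_of_dense fun z hzx => ?_)
  · have hz' : (z + h z) / 2 ≤ (x + y) / 2 := hz
    by_contra! hxz
    linarith [hxy.2 z hxz]
  · refine le_csSup (bddAbove_setOf_map_le (midpointId h) _) ?_
    show (z + h z) / 2 ≤ (x + y) / 2
    linarith [hxy.1 z hzx]

theorem graphSnd_midpoint {x y : ℝ} (hxy : FilledGraph h x y) :
    graphSnd h ((x + y) / 2) = y := by
  rw [graphSnd_apply, graphFst_midpoint h hxy]
  ring

theorem graphFst_surjective : Surjective (graphFst h) := fun x =>
  ⟨(x + h x) / 2, graphFst_midpoint h ⟨fun _ hx' => h.mono hx'.le, fun _ hx' => h.mono hx'.le⟩⟩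

theorem graphSnd_surjective : Surjective (graphSnd h) := by
  refine (graphSnd h).continuous_iff_surjective.1 ?_
  have hcont := (graphFst h).continuous_iff_surjective.2 (graphFst_surjective h)
  exact (continuous_const.mul continuous_id).sub hcont

/-- The action of `(f₀, f₁)` on the filled graph, in the coordinate `t = (x + y) / 2`. -/
noncomputable def graphAction (f₀ f₁ : CircleDeg1Lift) : CircleDeg1Lift where
  toFun t := (f₀ (graphFst h t) + f₁ (graphSnd h t)) / 2
  monotone' s t hst := by
    have := f₀.mono ((graphFst h).mono hst)
    have := f₁.mono ((graphSnd h).mono hst)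
    linarith
  map_add_one' t := by
    rw [(graphFst h).map_add_one, (graphSnd h).map_add_one, f₀.map_add_one, f₁.map_add_one]
    ring

theorem graphAction_apply (f₀ f₁ : CircleDeg1Lift) (t : ℝ) :
    graphAction h f₀ f₁ t = (f₀ (graphFst h t) + f₁ (graphSnd h t)) / 2 := rfl

theorem graphAction_one : graphAction h 1 1 = 1 := by
  ext t
  simp only [graphAction_apply, graphSnd_apply, coe_one, id]
  ring

variable {h} {g₀ g₁ : CircleDeg1Liftˣ}

theorem graphFst_graphAction (hg : SemiconjBy h g₀ g₁) (t : ℝ) :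
    graphFst h (graphAction h g₀ g₁ t) = g₀ (graphFst h t) :=
  graphFst_midpoint h ((filledGraph_graphFst h t).semiconj hg)

theorem graphSnd_graphAction (hg : SemiconjBy h g₀ g₁) (t : ℝ) :
    graphSnd h (graphAction h g₀ g₁ t) = g₁ (graphSnd h t) :=
  graphSnd_midpoint h ((filledGraph_graphFst h t).semiconj hg)

theorem semiconjBy_graphFst (hg : SemiconjBy h g₀ g₁) :
    SemiconjBy (graphFst h) (graphAction h g₀ g₁) g₀ :=
  semiconjBy_iff_semiconj.2 (graphFst_graphAction hg)

theorem semiconjBy_graphSnd (hg : SemiconjBy h g₀ g₁) :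
    SemiconjBy (graphSnd h) (graphAction h g₀ g₁) g₁ :=
  semiconjBy_iff_semiconj.2 (graphSnd_graphAction hg)

theorem graphAction_mul (f₀ f₁ : CircleDeg1Lift) (hg : SemiconjBy h g₀ g₁) :
    graphAction h (f₀ * g₀) (f₁ * g₁) = graphAction h f₀ f₁ * graphAction h g₀ g₁ := by
  ext t
  simp only [mul_apply, graphAction_apply (f₀ := f₀), graphFst_graphAction hg,
    graphSnd_graphAction hg]
  rfl

noncomputable def graphActionHom {L : Type*} [Monoid L] (ρ₀ ρ₁ : L →* CircleDeg1Liftˣ)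
    (hρ : ∀ g, SemiconjBy h (ρ₀ g) (ρ₁ g)) : L →* CircleDeg1Lift where
  toFun g := graphAction h (ρ₀ g) (ρ₁ g)
  map_one' := by simp only [map_one, Units.val_one, graphAction_one]
  map_mul' g g' := by simp only [map_mul, Units.val_mul, graphAction_mul _ _ (hρ g')]

end CircleDeg1Lift

open CircleDeg1Lift

theorem circleDeg1Lift_semiconjugacy_common_blowup_general {L : Type*} [Group L]
    (ρ₀ ρ₁ : L →* CircleDeg1Liftˣ) :
    (∃ h : CircleDeg1Lift,
        ∀ g : L, h * (ρ₀ g : CircleDeg1Lift) = (ρ₁ g : CircleDeg1Lift) * h) ↔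
    (∃ ρ : L →* CircleDeg1Liftˣ, ∃ h₀ h₁ : CircleDeg1Lift,
        Function.Surjective ⇑h₀ ∧ Function.Surjective ⇑h₁ ∧
        (∀ g : L, h₀ * (ρ g : CircleDeg1Lift) = (ρ₀ g : CircleDeg1Lift) * h₀) ∧
        (∀ g : L, h₁ * (ρ g : CircleDeg1Lift) = (ρ₁ g : CircleDeg1Lift) * h₁)) := by
  constructor
  · rintro ⟨h, hh⟩
    exact ⟨(graphActionHom ρ₀ ρ₁ hh).toHomUnits, graphFst h, graphSnd h, graphFst_surjective h,
      graphSnd_surjective h, fun g => semiconjBy_graphFst (hh g),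
      fun g => semiconjBy_graphSnd (hh g)⟩
  · rintro ⟨ρ, h₀, h₁, -, -, hh₀, hh₁⟩
    exact ⟨supCompInv h₁ h₀, fun g => semiconjBy_supCompInv (hh₀ g) (hh₁ g)⟩

/-- Semi-conjugacy of actions of a countable group `L` by elements of
`Homeo_ℤ(ℝ) = CircleDeg1Liftˣ` via a (possibly discontinuous) monotone degree-one map is
equivalent to the existence of a common "blow-up": an action `ρ : L → Homeo_ℤ(ℝ)` together
with surjective monotone degree-one maps `h₀, h₁` semi-conjugating `ρ` to `ρ₀` and `ρ₁`. -/
theorem circleDeg1Lift_semiconjugacy_common_blowup {L : Type*} [Group L] [Countable L]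
    (ρ₀ ρ₁ : L →* CircleDeg1Liftˣ) :
    (∃ h : CircleDeg1Lift,
        ∀ g : L, h * (ρ₀ g : CircleDeg1Lift) = (ρ₁ g : CircleDeg1Lift) * h) ↔
    (∃ ρ : L →* CircleDeg1Liftˣ, ∃ h₀ h₁ : CircleDeg1Lift,
        Function.Surjective ⇑h₀ ∧ Function.Surjective ⇑h₁ ∧
        (∀ g : L, h₀ * (ρ g : CircleDeg1Lift) = (ρ₀ g : CircleDeg1Lift) * h₀) ∧
        (∀ g : L, h₁ * (ρ g : CircleDeg1Lift) = (ρ₁ g : CircleDeg1Lift) * h₁)) :=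
  circleDeg1Lift_semiconjugacy_common_blowup_general ρ₀ ρ₁
end

section
/- Rotation number via the Euler cocycle: let F be a unit of the monoid CircleDeg1Lift (i.e. F ∈ Homeo_ℤ(ℝ), an orientation-preserving homeomorphism of ℝ commuting with integer translations) with F(0) ∈ [0, 1), so that F is the normalized lift of an orientation-preserving circle homeomorphism g. Then the translation number τ(F) satisfies τ(F) = lim_{n→∞} (1/n) · Σ_{k=0}^{n−1} ⌊F(Frac(F^k(0)))⌋, where Frac denotes the fractional part and ⌊·⌋ the floor; that is, the sequence n ↦ (Σ_{k=0}^{n−1} ⌊F(Int.fract((F^k)(0)))⌋)/n converges to the translation number of F. (Each summand ⌊F(Frac(F^k(0)))⌋ ∈ {0,1} is the value eu⁰(g, g^k) of the Euler cocycle based at 0.) -/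
/-!
Since `F` commutes with integer translations, `⌊F (Frac (F^k x))⌋ = ⌊F^(k+1) x⌋ - ⌊F^k x⌋`,
so the sum telescopes to `⌊F^n x⌋ - ⌊x⌋`. This differs from `F^n x - x` by less than `1`,
and `(F^n x - x) / n` tends to the translation number.
-/

open Filter Topology

theorem tendsto_div_natCast_of_abs_sub_le {u v : ℕ → ℝ} {l C : ℝ}
    (hu : Tendsto (fun n : ℕ => u n / n) atTop (𝓝 l)) (hC : ∀ n, |v n - u n| ≤ C) :
    Tendsto (fun n : ℕ => v n / n) atTop (𝓝 l) := by
  have h_error : Tendsto (fun n : ℕ => (v n - u n) / n) atTop (𝓝 0) := by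
    refine squeeze_zero_norm (fun n => ?_) (tendsto_const_div_atTop_nhds_zero_nat C)
    rw [norm_div, Real.norm_natCast, Real.norm_eq_abs]
    exact div_le_div_of_nonneg_right (hC n) n.cast_nonneg
  simpa [← add_div] using hu.add h_error

namespace CircleDeg1Lift

variable (f : CircleDeg1Lift)

theorem floor_map_fract_pow_apply (k : ℕ) (x : ℝ) :
    ⌊f (Int.fract ((f ^ k) x))⌋ = ⌊(f ^ (k + 1)) x⌋ - ⌊(f ^ k) x⌋ := by
  rw [Int.fract, map_sub_int, Int.floor_sub_intCast, pow_succ', mul_apply]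

theorem sum_floor_map_fract_pow_apply (n : ℕ) (x : ℝ) :
    ∑ k ∈ Finset.range n, ⌊f (Int.fract ((f ^ k) x))⌋ = ⌊(f ^ n) x⌋ - ⌊x⌋ := by
  simp_rw [floor_map_fract_pow_apply]
  simpa using Finset.sum_range_sub (fun k => ⌊(f ^ k) x⌋) n

theorem tendsto_sum_floor_map_fract_pow_apply_div (x : ℝ) :
    Tendsto
      (fun n : ℕ =>
        ((∑ k ∈ Finset.range n, ⌊f (Int.fract ((f ^ k) x))⌋ : ℤ) : ℝ) / n)
      atTop (𝓝 f.translationNumber) := by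
  refine tendsto_div_natCast_of_abs_sub_le (f.tendsto_translationNumber x) (C := 1) fun n => ?_
  rw [sum_floor_map_fract_pow_apply, Int.cast_sub, abs_sub_le_iff]
  have := Int.floor_le x
  have := Int.lt_floor_add_one x
  have := Int.floor_le ((f ^ n) x)
  have := Int.lt_floor_add_one ((f ^ n) x)
  constructor <;> linarith

end CircleDeg1Lift

theorem translationNumber_eq_limit_euler_cocycle_general (F : CircleDeg1Liftˣ) :
    Tendsto
      (fun n : ℕ =>
        ((∑ k ∈ Finset.range n,
            ⌊(F : CircleDeg1Lift) (Int.fract (((F : CircleDeg1Lift) ^ k) 0))⌋ : ℤ) : ℝ) / n)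
      atTop (nhds ((F : CircleDeg1Lift).translationNumber)) :=
  (F : CircleDeg1Lift).tendsto_sum_floor_map_fract_pow_apply_div 0

/-- **Rotation number via the Euler cocycle.**  Let `F ∈ Homeo_ℤ(ℝ) = CircleDeg1Liftˣ` be
normalized so that `F(0) ∈ [0,1)` (`F` is the normalized lift of a circle homeomorphism
`g`).  Then the translation number of `F` is the limit of the Birkhoff averages of the
Euler cocycle based at `0`:
`τ(F) = lim_{n→∞} (1/n) Σ_{k=0}^{n−1} ⌊F(Frac(F^k(0)))⌋`,
where `⌊F(Frac(F^k(0)))⌋ ∈ {0,1}` is the value `eu⁰(g, g^k)`. -/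
theorem translationNumber_eq_limit_euler_cocycle (F : CircleDeg1Liftˣ)
    (hF : (F : CircleDeg1Lift) 0 ∈ Set.Ico (0 : ℝ) 1) :
    Tendsto
      (fun n : ℕ =>
        ((∑ k ∈ Finset.range n,
            ⌊(F : CircleDeg1Lift) (Int.fract (((F : CircleDeg1Lift) ^ k) 0))⌋ : ℤ) : ℝ) / n)
      atTop (nhds ((F : CircleDeg1Lift).translationNumber)) :=
  translationNumber_eq_limit_euler_cocycle_general F
end

section
/- Let L be a countable group and let ρ₀, ρ₁ be actions of L on the circle S¹ = ℝ/ℤ by homeomorphisms, both of which are minimal (every orbit is dense in S¹). Let h : S¹ → S¹ be a monotone degree-one map of the circle, meaning there exists H ∈ CircleDeg1Lift with h(π(x)) = π(H(x)) for all x ∈ ℝ, where π : ℝ → ℝ/ℤ is the projection (h is not assumed continuous), and suppose h ∘ ρ₀(g) = ρ₁(g) ∘ h for all g ∈ L. Then h is a homeomorphism of S¹; in particular, the actions ρ₀ and ρ₁ are conjugate in the homeomorphism group of S¹. -/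
/-- If `ρ₀, ρ₁` are minimal actions of a countable group `L` on the circle `S¹ = ℝ/ℤ` by
homeomorphisms, and `h : S¹ → S¹` is a (possibly discontinuous) monotone degree-one map —
i.e. `h` lifts to some `H ∈ CircleDeg1Lift` — with `h ∘ ρ₀(g) = ρ₁(g) ∘ h` for all `g ∈ L`,
then `h` is a homeomorphism of `S¹`; in particular `ρ₀` and `ρ₁` are conjugate in the
homeomorphism group of the circle. -/
theorem minimal_semiconjugate_is_conjugate {L : Type*} [Group L] [Countable L]
    (ρ₀ ρ₁ : L →* (AddCircle (1 : ℝ) ≃ₜ AddCircle (1 : ℝ)))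
    (hmin₀ : ∀ x : AddCircle (1 : ℝ), Dense (Set.range fun g : L => ρ₀ g x))
    (hmin₁ : ∀ x : AddCircle (1 : ℝ), Dense (Set.range fun g : L => ρ₁ g x))
    (h : AddCircle (1 : ℝ) → AddCircle (1 : ℝ)) (H : CircleDeg1Lift)
    (hlift : ∀ x : ℝ, h (↑x : AddCircle (1 : ℝ)) = ((H x : ℝ) : AddCircle (1 : ℝ)))
    (hsc : ∀ (g : L) (x : AddCircle (1 : ℝ)), h (ρ₀ g x) = ρ₁ g (h x)) :
    ∃ e : AddCircle (1 : ℝ) ≃ₜ AddCircle (1 : ℝ),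
      (∀ x : AddCircle (1 : ℝ), e x = h x) ∧
      ∀ g : L, ρ₁ g = (e.symm.trans ((ρ₀ g).trans e)) := by
  haveI : Fact ((0:ℝ) < 1) := ⟨one_pos⟩
  have hmk : ∀ x : ℝ, (QuotientAddGroup.mk x : AddCircle (1:ℝ)) = (x : AddCircle (1:ℝ)) :=
    fun _ => rfl
  have hmksurj : Function.Surjective
      (fun x : ℝ => (x : AddCircle (1:ℝ))) := fun q => QuotientAddGroup.mk_surjective q
  -- equality in the circle
  have hcoe_eq : ∀ x y : ℝ, (x : AddCircle (1:ℝ)) = (y : AddCircle (1:ℝ)) ↔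
      ∃ k : ℤ, y = x + k := by
    intro x y
    rw [QuotientAddGroup.eq_iff_sub_mem]
    constructor
    · rintro hm
      obtain ⟨k, hk⟩ := AddSubgroup.mem_zmultiples_iff.1 hm
      exact ⟨-k, by push_cast [zsmul_eq_mul, mul_one] at hk ⊢; linarith⟩
    · rintro ⟨k, rfl⟩
      exact AddSubgroup.mem_zmultiples_iff.2 ⟨-k, by push_cast [zsmul_eq_mul, mul_one]; ring⟩
  -- the range of h is dense
  have hdense : Dense (Set.range h) := by
    refine (hmin₁ (h 0)).mono ?_
    rintro _ ⟨g, rfl⟩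
    exact ⟨ρ₀ g 0, hsc g 0⟩
  -- the range of H is dense
  have hpre : (fun x : ℝ => (x : AddCircle (1:ℝ))) ⁻¹' (Set.range h) = Set.range H := by
    ext t
    simp only [Set.mem_preimage, Set.mem_range]
    constructor
    · rintro ⟨z, hz⟩
      obtain ⟨s, rfl⟩ := hmksurj z
      rw [hlift s] at hz
      obtain ⟨k, hk⟩ := (hcoe_eq _ _).1 hz
      exact ⟨s + k, by rw [H.map_add_int, hk]⟩
    · rintro ⟨s, rfl⟩
      exact ⟨(s : AddCircle (1:ℝ)), (hlift s)⟩
  have hHdense : DenseRange H := by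
    have := hdense.preimage (f := fun x : ℝ => (x : AddCircle (1:ℝ)))
      QuotientAddGroup.isOpenMap_coe
    rwa [hpre] at this
  have hHcont : Continuous H := H.monotone.continuous_of_denseRange hHdense
  have hHsurj : Function.Surjective H :=
    hHcont.surjective H.tendsto_atTop H.tendsto_atBot
  -- the "locally constant" set V
  set V : Set (AddCircle (1:ℝ)) :=
    {z | ∃ U ∈ nhds z, ∀ w ∈ U, h w = h z} with hVdef
  have hVopen : IsOpen V := by
    rw [isOpen_iff_mem_nhds]
    rintro z ⟨U, hU, hconst⟩
    refine Filter.mem_of_superset (interior_mem_nhds.2 hU) ?_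
    intro w hw
    exact ⟨U, mem_interior_iff_mem_nhds.1 hw,
      fun w' hw' => (hconst w' hw').trans (hconst w (interior_subset hw)).symm⟩
  have hVinv : ∀ (g : L) (z : AddCircle (1:ℝ)), z ∈ V → ρ₀ g z ∈ V := by
    rintro g z ⟨U, hU, hconst⟩
    refine ⟨(ρ₀ g) '' U, (ρ₀ g).isOpenMap.image_mem_nhds hU, ?_⟩
    rintro _ ⟨w, hw, rfl⟩
    rw [hsc g w, hsc g z, hconst w hw]
  -- injectivity of H
  have hHinj : Function.Injective H := by
    have hVempty : V = ∅ := by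
      by_cases hVuniv : V = Set.univ
      · -- h would be constant, contradicting density of its range
        exfalso
        have hclopen : IsClopen (h ⁻¹' {h 0}) := by
          constructor
          · rw [← isOpen_compl_iff, isOpen_iff_mem_nhds]
            intro w hw
            have hwV : w ∈ V := hVuniv ▸ Set.mem_univ w
            obtain ⟨U, hU, hconst⟩ := hwV
            refine Filter.mem_of_superset hU ?_
            intro w' hw' hw''
            apply hw
            rw [Set.mem_preimage, Set.mem_singleton_iff] at hw'' ⊢
            exact (hconst w' hw').symm.trans hw''
          · rw [isOpen_iff_mem_nhds]
            intro w hw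
            have hwV : w ∈ V := hVuniv ▸ Set.mem_univ w
            obtain ⟨U, hU, hconst⟩ := hwV
            refine Filter.mem_of_superset hU ?_
            intro w' hw'
            rw [Set.mem_preimage, Set.mem_singleton_iff] at hw ⊢
            rw [hconst w' hw', hw]
        have huniv : h ⁻¹' {h 0} = Set.univ :=
          hclopen.eq_univ ⟨0, rfl⟩
        have hconst_all : ∀ w, h w = h 0 := by
          intro w
          have : w ∈ h ⁻¹' {h 0} := huniv ▸ Set.mem_univ w
          exact this
        have hrange : Set.range h ⊆ {h 0} := by
          rintro _ ⟨w, rfl⟩; exact hconst_all w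
        have hd : Dense ({h 0} : Set (AddCircle (1:ℝ))) := hdense.mono hrange
        have h12 : ((1/2 : ℝ) : AddCircle (1:ℝ)) ∈ ({h 0} : Set (AddCircle (1:ℝ))) := by
          have := hd ((1/2 : ℝ) : AddCircle (1:ℝ))
          rwa [IsClosed.closure_eq isClosed_singleton] at this
        have h0 : ((0 : ℝ) : AddCircle (1:ℝ)) ∈ ({h 0} : Set (AddCircle (1:ℝ))) := by
          have := hd ((0 : ℝ) : AddCircle (1:ℝ))
          rwa [IsClosed.closure_eq isClosed_singleton] at this
        rw [Set.mem_singleton_iff] at h12 h0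
        have : ((1/2 : ℝ) : AddCircle (1:ℝ)) = ((0:ℝ) : AddCircle (1:ℝ)) := by
          rw [h12, h0]
        obtain ⟨k, hk⟩ := (hcoe_eq _ _).1 this
        have : (2 * k : ℤ) = -1 := by
          have : (2 * k : ℝ) = -1 := by linarith
          exact_mod_cast this
        omega
      · -- minimality forces V to be empty
        obtain ⟨x, hx⟩ : (Vᶜ).Nonempty := by
          rw [Set.nonempty_compl]; exact hVuniv
        have horb : Set.range (fun g : L => ρ₀ g x) ⊆ Vᶜ := by
          rintro _ ⟨g, rfl⟩ hmem
          refine hx ?_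
          have := hVinv g⁻¹ _ hmem
          have hinv : (ρ₀ g⁻¹) ((ρ₀ g) x) = x := by
            rw [map_inv]
            exact (ρ₀ g).symm_apply_apply x
          rwa [hinv] at this
        have hcompl : Vᶜ = Set.univ := by
          apply Set.eq_univ_of_univ_subset
          calc Set.univ = closure (Set.range fun g : L => ρ₀ g x) :=
                ((hmin₀ x).closure_eq).symm
            _ ⊆ closure (Vᶜ) := closure_mono horb
            _ = Vᶜ := (hVopen.isClosed_compl).closure_eq
        rwa [Set.compl_univ_iff] at hcompl
    -- now deduce injectivity
    intro x y hxy
    by_contra hne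
    rcases lt_or_gt_of_ne hne with hlt | hlt
    · have hmid : ((x + y) / 2 : ℝ) ∈ Set.Ioo x y := ⟨by linarith, by linarith⟩
      have hz : (((x + y) / 2 : ℝ) : AddCircle (1:ℝ)) ∈ V := by
        refine ⟨(fun t : ℝ => (t : AddCircle (1:ℝ))) '' Set.Ioo x y,
          QuotientAddGroup.isOpenMap_coe.image_mem_nhds
            (isOpen_Ioo.mem_nhds hmid), ?_⟩
        rintro _ ⟨t, ht, rfl⟩
        rw [hlift t, hlift ((x+y)/2)]
        have h1 : H t = H x :=
          le_antisymm (hxy ▸ H.monotone ht.2.le) (H.monotone ht.1.le)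
        have h2 : H ((x+y)/2) = H x :=
          le_antisymm (hxy ▸ H.monotone hmid.2.le) (H.monotone hmid.1.le)
        rw [h1, h2]
      rw [hVempty] at hz
      exact hz
    · have hmid : ((x + y) / 2 : ℝ) ∈ Set.Ioo y x := ⟨by linarith, by linarith⟩
      have hz : (((x + y) / 2 : ℝ) : AddCircle (1:ℝ)) ∈ V := by
        refine ⟨(fun t : ℝ => (t : AddCircle (1:ℝ))) '' Set.Ioo y x,
          QuotientAddGroup.isOpenMap_coe.image_mem_nhds
            (isOpen_Ioo.mem_nhds hmid), ?_⟩
        rintro _ ⟨t, ht, rfl⟩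
        rw [hlift t, hlift ((x+y)/2)]
        have h1 : H t = H y :=
          le_antisymm (hxy ▸ H.monotone ht.2.le) (H.monotone ht.1.le)
        have h2 : H ((x+y)/2) = H y :=
          le_antisymm (hxy ▸ H.monotone hmid.2.le) (H.monotone hmid.1.le)
        rw [h1, h2]
      rw [hVempty] at hz
      exact hz
  -- h is bijective
  have hsurj : Function.Surjective h := by
    intro q
    obtain ⟨t, rfl⟩ := hmksurj q
    obtain ⟨s, hs⟩ := hHsurj t
    exact ⟨(s : AddCircle (1:ℝ)), by rw [hlift s, hs]⟩
  have hinj : Function.Injective h := by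
    intro a b hab
    obtain ⟨x, rfl⟩ := hmksurj a
    obtain ⟨y, rfl⟩ := hmksurj b
    rw [hlift x, hlift y] at hab
    obtain ⟨k, hk⟩ := (hcoe_eq _ _).1 hab
    have : H y = H (x + k) := by rw [H.map_add_int, hk]
    have hyx : y = x + k := hHinj this
    rw [hyx]
    show ((x : ℝ) : AddCircle (1:ℝ)) = ((x + (k:ℝ) : ℝ) : AddCircle (1:ℝ))
    exact (hcoe_eq x (x + k)).2 ⟨k, rfl⟩
  have hcont : Continuous h := by
    rw [(QuotientAddGroup.isQuotientMap_mk
      (AddSubgroup.zmultiples (1:ℝ))).continuous_iff]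
    have : (h ∘ QuotientAddGroup.mk) = fun t : ℝ => ((H t : ℝ) : AddCircle (1:ℝ)) := by
      funext t
      exact hlift t
    rw [this]
    exact QuotientAddGroup.continuous_mk.comp hHcont
  -- build the homeomorphism
  let eqv : AddCircle (1:ℝ) ≃ AddCircle (1:ℝ) := Equiv.ofBijective h ⟨hinj, hsurj⟩
  let e : AddCircle (1:ℝ) ≃ₜ AddCircle (1:ℝ) :=
    Continuous.homeoOfEquivCompactToT2 (f := eqv) hcont
  refine ⟨e, fun x => rfl, fun g => ?_⟩
  apply Homeomorph.ext
  intro x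
  have h1 : h (e.symm x) = x := e.apply_symm_apply x
  have h2 := hsc g (e.symm x)
  rw [h1] at h2
  show ρ₁ g x = e ((ρ₀ g) (e.symm x))
  rw [← h2]
  rfl
end

section
/- Rigidity of traces along faithful paths: let L be a finitely generated group and let (ρ_t)_{t∈[0,1]} be a path in Hom(L, PSL₂(ℝ)), i.e. for every g ∈ L the map t ↦ ρ_t(g) is continuous on [0,1], and suppose each ρ_t is injective. Then for every g ∈ L and all s, t ∈ [0,1]: if tr²(ρ_s(g)) < 4, then tr²(ρ_t(g)) = tr²(ρ_s(g)). (Equivalently, each elliptic element stays elliptic with constant trace-squared along the path; this is the trace form of the statement that a path of faithful projective representations consists of a single semi-conjugacy class.) -/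
noncomputable instance : TopologicalSpace (Matrix.SpecialLinearGroup (Fin 2) ℝ) :=
  inferInstanceAs (TopologicalSpace {A : Matrix (Fin 2) (Fin 2) ℝ // A.det = 1})

/-!
Fix `g` and let `f u = tr²(ρ_u g)`, a continuous function on `[0, 1]`. If `f` took two different
values, one of them below `4`, then by the intermediate value theorem it would take a value
`(2 cos πq)² < 4` with `q` rational, at some time `u`. Iterating Cayley–Hamilton gives
`Mⁿ = S_{n-1}(tr M) M - S_{n-2}(tr M)` for `det M = 1` (Chebyshev polynomials `S`), so an elliptic
`M` with trace `2 cos πq` has `M^{den q} = ±1`. Hence `ρ_u g` has finite order, and by injectivity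
of `ρ_u` so does `g`, say `gⁿ = 1`. By the same formula a lift of any `ρ_w g` has trace `±2` or a
root of `S_{n-1}`, so `f` takes finitely many values, which is impossible for a nonconstant
function on a connected space.
-/

open Polynomial Polynomial.Chebyshev MatrixGroups Subgroup

namespace Matrix

variable {R : Type*} [CommRing R] [Nontrivial R] {M : Matrix (Fin 2) (Fin 2) R}

theorem sq_eq_trace_smul_sub_one_of_det_eq_one (h : M.det = 1) : M ^ 2 = M.trace • M - 1 := by
  have hCH := aeval_self_charpoly M
  simp only [charpoly_fin_two, h, map_one, map_add, aeval_sub, map_pow, aeval_X, map_mul,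
    Polynomial.aeval_C] at hCH
  rw [Algebra.algebraMap_eq_smul_one, smul_mul_assoc, one_mul] at hCH
  linear_combination (norm := module) hCH

theorem pow_eq_S_smul_sub_S_smul_of_det_eq_one (h : M.det = 1) (n : ℕ) :
    M ^ n = (S R (n - 1)).eval M.trace • M - (S R (n - 2)).eval M.trace • 1 := by
  induction n with
  | zero => simp
  | succ n ih =>
    have hS : S R n = X * S R (n - 1) - S R (n - 2) := S_eq R n
    rw [pow_succ, ih, sub_mul, smul_mul_assoc, smul_mul_assoc, one_mul, ← sq,
      sq_eq_trace_smul_sub_one_of_det_eq_one h]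
    push_cast
    simp only [add_sub_cancel_right, show (n : ℤ) + 1 - 2 = n - 1 by ring, hS, eval_sub, eval_mul,
      eval_X]
    module

end Matrix

namespace Matrix.SpecialLinearGroup

section CommRing

variable {R : Type*} [CommRing R]

theorem mem_center_of_coe_eq_smul_one {X : SL(2, R)} {c : R}
    (h : (X : Matrix (Fin 2) (Fin 2) R) = c • 1) : X ∈ center SL(2, R) :=
  Subgroup.mem_center_iff.mpr fun B => Subtype.ext <| by simp [h]

theorem trace_sq_eq_four_of_mem_center {X : SL(2, R)} (hX : X ∈ center SL(2, R)) :
    (X : Matrix (Fin 2) (Fin 2) R).trace ^ 2 = 4 := by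
  obtain ⟨r, hr, hrX⟩ := mem_center_iff.mp hX
  rw [Fintype.card_fin] at hr
  rw [← hrX, scalar_apply, ← smul_one_eq_diagonal, trace_smul, trace_one, Fintype.card_fin,
    smul_eq_mul]
  linear_combination 4 * hr

theorem trace_sq_mul_of_mem_center (X : SL(2, R)) {Z : SL(2, R)} (hZ : Z ∈ center SL(2, R)) :
    ((X * Z : SL(2, R)) : Matrix (Fin 2) (Fin 2) R).trace ^ 2 =
      (X : Matrix (Fin 2) (Fin 2) R).trace ^ 2 := by
  obtain ⟨r, hr, hrZ⟩ := mem_center_iff.mp hZ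
  rw [Fintype.card_fin] at hr
  rw [coe_mul, ← hrZ, scalar_apply, ← smul_one_eq_diagonal, Matrix.mul_smul, mul_one, trace_smul,
    smul_eq_mul]
  linear_combination (X : Matrix (Fin 2) (Fin 2) R).trace ^ 2 * hr

end CommRing

section Field

variable {K : Type*} [Field K]

theorem pow_mem_center_iff (X : SL(2, K)) (n : ℕ) :
    X ^ n ∈ center SL(2, K) ↔
      (S K (n - 1)).eval (X : Matrix (Fin 2) (Fin 2) K).trace = 0 ∨ X ∈ center SL(2, K) := by
  have hpow := coe_pow X n
  rw [pow_eq_S_smul_sub_S_smul_of_det_eq_one X.property] at hpow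
  set a := (S K (n - 1)).eval (X : Matrix (Fin 2) (Fin 2) K).trace
  set b := (S K (n - 2)).eval (X : Matrix (Fin 2) (Fin 2) K).trace
  constructor
  · intro hXn
    refine or_iff_not_imp_left.mpr fun ha => ?_
    obtain ⟨r, -, hr⟩ := mem_center_iff.mp hXn
    refine mem_center_of_coe_eq_smul_one (c := a⁻¹ * (b + r)) ?_
    rw [scalar_apply, ← smul_one_eq_diagonal, hpow] at hr
    calc (X : Matrix (Fin 2) (Fin 2) K) = a⁻¹ • (a • (X : Matrix (Fin 2) (Fin 2) K)) := by
          rw [inv_smul_smul₀ ha]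
      _ = _ := by rw [sub_eq_iff_eq_add.mp hr.symm]; module
  · rintro (ha | hX)
    · exact mem_center_of_coe_eq_smul_one (c := -b) (by rw [hpow, ha]; module)
    · exact Subgroup.pow_mem _ hX n

theorem finite_trace_sq_image_pow_mem_center [CharZero K] {n : ℕ} (hn : n ≠ 0) :
    ((fun X : SL(2, K) => (X : Matrix (Fin 2) (Fin 2) K).trace ^ 2) ''
      {X | X ^ n ∈ center SL(2, K)}).Finite := by
  have hS : S K (n - 1) ≠ 0 := fun h => by
    simpa [h, eq_comm, hn] using S_eval_two K (n - 1)
  refine (((finite_setOfPred_isRoot hS).image (· ^ 2)).insert 4).subset ?_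
  rintro _ ⟨X, hX, rfl⟩
  rcases (pow_mem_center_iff X n).mp hX with h | h
  · exact Or.inr ⟨_, h, rfl⟩
  · exact Or.inl (trace_sq_eq_four_of_mem_center h)

end Field

end Matrix.SpecialLinearGroup

open Real
open Set (Icc Ioo range)

theorem Polynomial.Chebyshev.S_den_sub_one_eval_two_mul_cos_pi_mul (q : ℚ)
    (hq : sin (π * q) ≠ 0) : (S ℝ (q.den - 1)).eval (2 * cos (π * q)) = 0 := by
  have h := S_two_mul_real_cos (π * q) (q.den - 1)
  have hden : ((q.den - 1 : ℤ) + 1 : ℝ) * (π * q) = q.num * π := by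
    push_cast
    rw [sub_add_cancel, Rat.cast_def]
    field_simp
  rw [hden, sin_int_mul_pi] at h
  exact (mul_eq_zero.mp h).resolve_right hq

namespace Matrix.SpecialLinearGroup

theorem pow_den_mem_center_of_trace_eq_two_mul_cos {X : SL(2, ℝ)} {q : ℚ}
    (hX : (X : Matrix (Fin 2) (Fin 2) ℝ).trace = 2 * cos (π * q))
    (h4 : (X : Matrix (Fin 2) (Fin 2) ℝ).trace ^ 2 < 4) : X ^ q.den ∈ center SL(2, ℝ) := by
  have hsin : sin (π * q) ≠ 0 := fun h => by
    rw [hX] at h4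
    nlinarith [sin_sq_add_cos_sq (π * q)]
  refine (pow_mem_center_iff X q.den).mpr (Or.inl ?_)
  rw [hX]
  exact S_den_sub_one_eval_two_mul_cos_pi_mul q hsin

theorem exists_pow_mem_center_of_trace_sq_eq_two_mul_cos_sq {X : SL(2, ℝ)} {q : ℚ}
    (hX : (X : Matrix (Fin 2) (Fin 2) ℝ).trace ^ 2 = (2 * cos (π * q)) ^ 2)
    (h4 : (X : Matrix (Fin 2) (Fin 2) ℝ).trace ^ 2 < 4) : ∃ n ≠ 0, X ^ n ∈ center SL(2, ℝ) := by
  rcases sq_eq_sq_iff_eq_or_eq_neg.mp hX with h | h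
  · exact ⟨q.den, q.den_nz, pow_den_mem_center_of_trace_eq_two_mul_cos h h4⟩
  · refine ⟨(1 - q).den, (1 - q).den_nz, pow_den_mem_center_of_trace_eq_two_mul_cos ?_ h4⟩
    rw [h, Rat.cast_sub, Rat.cast_one, mul_one_sub, cos_pi_sub]
    ring

end Matrix.SpecialLinearGroup

theorem exists_rat_two_mul_cos_sq_mem_Ioo {a b : ℝ} (ha : 0 ≤ a) (hab : a < b) (hb : b ≤ 4) :
    ∃ q : ℚ, (2 * cos (π * q)) ^ 2 ∈ Ioo a b := by
  set f : ℝ → ℝ := fun x => (2 * cos (π * x)) ^ 2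
  have hf : Continuous f := by fun_prop
  have hmid : (a + b) / 2 ∈ Icc (f (1 / 2)) (f 0) := by
    simp only [f, mul_one_div, cos_pi_div_two, mul_zero, cos_zero]
    constructor <;> linarith
  obtain ⟨x, -, hx⟩ := intermediate_value_Icc' (by norm_num) hf.continuousOn hmid
  exact Rat.denseRange_cast.exists_mem_open (isOpen_Ioo.preimage hf)
    ⟨x, show f x ∈ Ioo a b by rw [hx]; constructor <;> linarith⟩

local notation "PSL(2, " R ")" => SL(2, R) ⧸ Subgroup.center SL(2, R)

namespace PSL2

def traceSq {R : Type*} [CommRing R] : PSL(2, R) → R :=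
  Quotient.lift (fun X : SL(2, R) => (X : Matrix (Fin 2) (Fin 2) R).trace ^ 2) fun X Y hXY => by
    rw [← mul_inv_cancel_left X Y]
    exact (Matrix.SpecialLinearGroup.trace_sq_mul_of_mem_center X
      (QuotientGroup.leftRel_apply.mp hXY)).symm

@[simp]
theorem traceSq_mk {R : Type*} [CommRing R] (X : SL(2, R)) :
    traceSq (X : PSL(2, R)) = (X : Matrix (Fin 2) (Fin 2) R).trace ^ 2 :=
  rfl

theorem traceSq_nonneg {R : Type*} [CommRing R] [LinearOrder R] [IsStrictOrderedRing R]
    (z : PSL(2, R)) : 0 ≤ traceSq z := by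
  induction z using QuotientGroup.induction_on with | H X => exact sq_nonneg _

theorem continuous_traceSq : Continuous (traceSq : PSL(2, ℝ) → ℝ) :=
  continuous_quot_lift _ (continuous_subtype_val.matrix_trace.pow 2)

theorem exists_pow_eq_one_of_traceSq_eq_two_mul_cos_sq {z : PSL(2, ℝ)} {q : ℚ}
    (hz : traceSq z = (2 * cos (π * q)) ^ 2) (h4 : traceSq z < 4) : ∃ n ≠ 0, z ^ n = 1 := by
  induction z using QuotientGroup.induction_on with | H X => ?_
  obtain ⟨n, hn, hXn⟩ :=
    Matrix.SpecialLinearGroup.exists_pow_mem_center_of_trace_sq_eq_two_mul_cos_sq hz h4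
  exact ⟨n, hn, by rw [← QuotientGroup.mk_pow, QuotientGroup.eq_one_iff]; exact hXn⟩

theorem finite_traceSq_image_pow_eq_one {n : ℕ} (hn : n ≠ 0) :
    (traceSq '' {z : PSL(2, ℝ) | z ^ n = 1}).Finite := by
  refine (Matrix.SpecialLinearGroup.finite_trace_sq_image_pow_mem_center hn).subset ?_
  rintro _ ⟨z, hz, rfl⟩
  induction z using QuotientGroup.induction_on with | H X => ?_
  refine ⟨X, ?_, rfl⟩
  rwa [Set.mem_ofPred_eq, ← QuotientGroup.mk_pow, QuotientGroup.eq_one_iff] at hz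

end PSL2

theorem faithful_path_trace_rigidity_general {L : Type*} [Group L]
    (ρ : Set.Icc (0 : ℝ) 1 → L →*
      (Matrix.SpecialLinearGroup (Fin 2) ℝ ⧸
        Subgroup.center (Matrix.SpecialLinearGroup (Fin 2) ℝ)))
    (hcont : ∀ g : L, Continuous fun t : Set.Icc (0 : ℝ) 1 => ρ t g)
    (hinj : ∀ t : Set.Icc (0 : ℝ) 1, Function.Injective (ρ t)) :
    ∀ (g : L) (s t : Set.Icc (0 : ℝ) 1)
      (A B : Matrix.SpecialLinearGroup (Fin 2) ℝ),
      (↑A = ρ s g) → (↑B = ρ t g) →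
      ((A : Matrix (Fin 2) (Fin 2) ℝ).trace) ^ 2 < 4 →
      ((B : Matrix (Fin 2) (Fin 2) ℝ).trace) ^ 2 =
        ((A : Matrix (Fin 2) (Fin 2) ℝ).trace) ^ 2 := by
  intro g s t A B hA hB hA4
  set f := fun u => PSL2.traceSq (ρ u g)
  have hf : IsPreconnected (range f) :=
    isPreconnected_range (PSL2.continuous_traceSq.comp (hcont g))
  have hfs : f s = (A : Matrix (Fin 2) (Fin 2) ℝ).trace ^ 2 := by rw [← PSL2.traceSq_mk, hA]
  have hft : f t = (B : Matrix (Fin 2) (Fin 2) ℝ).trace ^ 2 := by rw [← PSL2.traceSq_mk, hB]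
  rw [← hfs, ← hft]
  rw [← hfs] at hA4
  by_contra hne
  obtain ⟨q, hq⟩ := exists_rat_two_mul_cos_sq_mem_Ioo (a := min (f s) (f t))
    (b := min (max (f s) (f t)) 4) (le_min (PSL2.traceSq_nonneg _) (PSL2.traceSq_nonneg _))
    (lt_min (min_lt_max.mpr (Ne.symm hne)) ((min_le_left _ _).trans_lt hA4)) (min_le_right _ _)
  obtain ⟨u, hu⟩ := hf.ordConnected.uIcc_subset ⟨s, rfl⟩ ⟨t, rfl⟩
    ⟨hq.1.le, hq.2.le.trans (min_le_left _ _)⟩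
  obtain ⟨n, hn, hgn⟩ := PSL2.exists_pow_eq_one_of_traceSq_eq_two_mul_cos_sq hu
    (show f u < 4 from hu ▸ hq.2.trans_le (min_le_right _ _))
  have hg : g ^ n = 1 := hinj u (by rwa [map_pow, map_one])
  have hfin : (range f).Finite := (PSL2.finite_traceSq_image_pow_eq_one hn).subset <| by
    rintro _ ⟨w, rfl⟩
    exact ⟨ρ w g, by rw [Set.mem_ofPred_eq, ← map_pow, hg, map_one], rfl⟩
  exact hf.infinite_of_nontrivial ⟨f s, ⟨s, rfl⟩, f t, ⟨t, rfl⟩, Ne.symm hne⟩ hfin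

/-- **Rigidity of traces along faithful paths.**  Let `L` be a finitely generated group
and `(ρ_t)_{t ∈ [0,1]}` a path of injective homomorphisms into
`PSL₂(ℝ) = SL(2,ℝ)/{±I}` (each `t ↦ ρ_t(g)` continuous).  Then for every `g ∈ L` and all
`s, t ∈ [0,1]`, if `tr²(ρ_s(g)) < 4` then `tr²(ρ_t(g)) = tr²(ρ_s(g))` — where `tr²` is
expressed via arbitrary lifts to `SL(2,ℝ)`, on which it is well defined. -/
theorem faithful_path_trace_rigidity {L : Type*} [Group L] (hfg : Group.FG L)
    (ρ : Set.Icc (0 : ℝ) 1 → L →*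
      (Matrix.SpecialLinearGroup (Fin 2) ℝ ⧸
        Subgroup.center (Matrix.SpecialLinearGroup (Fin 2) ℝ)))
    (hcont : ∀ g : L, Continuous fun t : Set.Icc (0 : ℝ) 1 => ρ t g)
    (hinj : ∀ t : Set.Icc (0 : ℝ) 1, Function.Injective (ρ t)) :
    ∀ (g : L) (s t : Set.Icc (0 : ℝ) 1)
      (A B : Matrix.SpecialLinearGroup (Fin 2) ℝ),
      (↑A = ρ s g) → (↑B = ρ t g) →
      ((A : Matrix (Fin 2) (Fin 2) ℝ).trace) ^ 2 < 4 →
      ((B : Matrix (Fin 2) (Fin 2) ℝ).trace) ^ 2 =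
        ((A : Matrix (Fin 2) (Fin 2) ℝ).trace) ^ 2 :=
  faithful_path_trace_rigidity_general ρ hcont hinj
end
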